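/- arXiv:2307.05457 — 7 statements merged into one kernel-verified Lean document; each statement's English description precedes it below -/
import Mathlib

section
/- Let (Ω, 𝒜, μ) be a finite measure space, X : Ω → ℝ a measurable function, x₀ ∈ ℝ and h > 0. Let K₋, K₊ : ℝ → [0, ∞) be bounded measurable functions with K₋(x) = 0 for x ∉ [−1, 0] and K₊(x) = 0 for x ∉ [0, 1]. Set K₋ₕ(x) := K₋((x − x₀)/h), K₊ₕ(x) := K₊((x − x₀)/h), T⁻¹ := ∫_Ω K₋ₕ(X) dμ, T⁺¹ := ∫_Ω K₊ₕ(X) dμ, T⁻² := −∫_Ω K₋ₕ(X)·(X − x₀) dμ, T⁺² := ∫_Ω K₊ₕ(X)·(X − x₀) dμ, and J := T⁻¹·T⁺² + T⁺¹·T⁻². If J > 0, then the function Kₕ := (T⁺²·K₋ₕ + T⁻²·K₊ₕ)/J satisfies: (i) Kₕ ≥ 0 on ℝ; (ii) Kₕ(x) = 0 whenever |x − x₀| > h; (iii) ∫_Ω Kₕ(X) dμ = 1; (iv) ∫_Ω Kₕ(X)·(X − x₀) dμ = 0. -/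
open MeasureTheory

/-- Construction of the data-driven localized kernel `K_{h,σ}` (properties (I)–(III) of
Section 3.1 of the paper): given a finite measure space, a measurable design `X`, and two
bounded nonnegative measurable kernels supported in `[-1,0]` and `[0,1]` respectively, if the
normalizing quantity `J > 0`, then the combined kernel `Kₕ` is nonnegative, supported in
`[x₀ - h, x₀ + h]`, integrates to one against the design, and has vanishing first moment. -/
theorem kernel_construction
    {Ω : Type*} [MeasurableSpace Ω] (μ : Measure Ω) [IsFiniteMeasure μ]
    (X : Ω → ℝ) (hX : Measurable X) (x₀ h : ℝ) (hh : 0 < h)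
    (Km Kp : ℝ → ℝ) (hKm_meas : Measurable Km) (hKp_meas : Measurable Kp)
    (hKm_nonneg : ∀ x, 0 ≤ Km x) (hKp_nonneg : ∀ x, 0 ≤ Kp x)
    (hKm_bdd : ∃ M : ℝ, ∀ x, Km x ≤ M) (hKp_bdd : ∃ M : ℝ, ∀ x, Kp x ≤ M)
    (hKm_supp : ∀ x, x ∉ Set.Icc (-1 : ℝ) 0 → Km x = 0)
    (hKp_supp : ∀ x, x ∉ Set.Icc (0 : ℝ) 1 → Kp x = 0) :
    let Kmh : ℝ → ℝ := fun x => Km ((x - x₀) / h)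
    let Kph : ℝ → ℝ := fun x => Kp ((x - x₀) / h)
    let Tm1 : ℝ := ∫ ω, Kmh (X ω) ∂μ
    let Tp1 : ℝ := ∫ ω, Kph (X ω) ∂μ
    let Tm2 : ℝ := - ∫ ω, Kmh (X ω) * (X ω - x₀) ∂μ
    let Tp2 : ℝ := ∫ ω, Kph (X ω) * (X ω - x₀) ∂μ
    let J : ℝ := Tm1 * Tp2 + Tp1 * Tm2
    let Kh : ℝ → ℝ := fun x => (Tp2 * Kmh x + Tm2 * Kph x) / J
    0 < J →
      ((∀ x, 0 ≤ Kh x) ∧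
       (∀ x, h < |x - x₀| → Kh x = 0) ∧
       (∫ ω, Kh (X ω) ∂μ) = 1 ∧
       (∫ ω, Kh (X ω) * (X ω - x₀) ∂μ) = 0) := by
  intro Kmh Kph Tm1 Tp1 Tm2 Tp2 J Kh hJ
  obtain ⟨M, hM⟩ := hKm_bdd
  obtain ⟨M', hM'⟩ := hKp_bdd
  have hM0 : 0 ≤ M := le_trans (hKm_nonneg 0) (hM 0)
  have hM'0 : 0 ≤ M' := le_trans (hKp_nonneg 0) (hM' 0)
  have hJne : J ≠ 0 := ne_of_gt hJ
  have hmeas_aff : Measurable fun x : ℝ => (x - x₀) / h :=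
    (measurable_id.sub_const x₀).div_const h
  have hm1 : Measurable fun ω => Kmh (X ω) :=
    (hKm_meas.comp hmeas_aff).comp hX
  have hm2 : Measurable fun ω => Kph (X ω) :=
    (hKp_meas.comp hmeas_aff).comp hX
  have hm3 : Measurable fun ω => Kmh (X ω) * (X ω - x₀) :=
    hm1.mul ((hX.sub_const x₀))
  have hm4 : Measurable fun ω => Kph (X ω) * (X ω - x₀) :=
    hm2.mul ((hX.sub_const x₀))
  have i1 : Integrable (fun ω => Kmh (X ω)) μ := by
    refine Integrable.mono' (integrable_const M) hm1.aestronglyMeasurable ?_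
    filter_upwards with ω
    rw [Real.norm_eq_abs, abs_of_nonneg (hKm_nonneg _)]
    exact hM _
  have i2 : Integrable (fun ω => Kph (X ω)) μ := by
    refine Integrable.mono' (integrable_const M') hm2.aestronglyMeasurable ?_
    filter_upwards with ω
    rw [Real.norm_eq_abs, abs_of_nonneg (hKp_nonneg _)]
    exact hM' _
  have keym : ∀ x : ℝ, |Km ((x - x₀) / h) * (x - x₀)| ≤ M * h := by
    intro x
    by_cases hx : (x - x₀) / h ∈ Set.Icc (-1 : ℝ) 0
    · have h1 : |x - x₀| ≤ h := by
        have ha := (le_div_iff₀ hh).mp hx.1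
        have hb := (div_le_iff₀ hh).mp hx.2
        rw [abs_le]; constructor <;> nlinarith
      rw [abs_mul, abs_of_nonneg (hKm_nonneg _)]
      exact mul_le_mul (hM _) h1 (abs_nonneg _) hM0
    · rw [hKm_supp _ hx]
      simp [mul_nonneg hM0 hh.le]
  have keyp : ∀ x : ℝ, |Kp ((x - x₀) / h) * (x - x₀)| ≤ M' * h := by
    intro x
    by_cases hx : (x - x₀) / h ∈ Set.Icc (0 : ℝ) 1
    · have h1 : |x - x₀| ≤ h := by
        have ha := (le_div_iff₀ hh).mp hx.1
        have hb := (div_le_iff₀ hh).mp hx.2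
        rw [abs_le]; constructor <;> nlinarith
      rw [abs_mul, abs_of_nonneg (hKp_nonneg _)]
      exact mul_le_mul (hM' _) h1 (abs_nonneg _) hM'0
    · rw [hKp_supp _ hx]
      simp [mul_nonneg hM'0 hh.le]
  have i3 : Integrable (fun ω => Kmh (X ω) * (X ω - x₀)) μ := by
    refine Integrable.mono' (integrable_const (M * h)) hm3.aestronglyMeasurable ?_
    filter_upwards with ω
    exact keym (X ω)
  have i4 : Integrable (fun ω => Kph (X ω) * (X ω - x₀)) μ := by
    refine Integrable.mono' (integrable_const (M' * h)) hm4.aestronglyMeasurable ?_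
    filter_upwards with ω
    exact keyp (X ω)
  -- sign facts
  have s1 : ∀ x : ℝ, Km ((x - x₀) / h) * (x - x₀) ≤ 0 := by
    intro x
    rcases le_or_gt (x - x₀) 0 with hle | hlt
    · exact mul_nonpos_of_nonneg_of_nonpos (hKm_nonneg _) hle
    · have : (x - x₀) / h ∉ Set.Icc (-1 : ℝ) 0 := by
        intro hc
        have := (div_le_iff₀ hh).mp hc.2
        nlinarith
      rw [hKm_supp _ this, zero_mul]
  have s2 : ∀ x : ℝ, 0 ≤ Kp ((x - x₀) / h) * (x - x₀) := by
    intro x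
    rcases le_or_gt 0 (x - x₀) with hle | hlt
    · exact mul_nonneg (hKp_nonneg _) hle
    · have : (x - x₀) / h ∉ Set.Icc (0 : ℝ) 1 := by
        intro hc
        have := (le_div_iff₀ hh).mp hc.1
        nlinarith
      rw [hKp_supp _ this, zero_mul]
  have hTm2 : 0 ≤ Tm2 := by
    have : (∫ ω, Kmh (X ω) * (X ω - x₀) ∂μ) ≤ 0 :=
      integral_nonpos fun ω => s1 (X ω)
    simpa [Tm2] using this
  have hTp2 : 0 ≤ Tp2 := integral_nonneg fun ω => s2 (X ω)
  refine ⟨?_, ?_, ?_, ?_⟩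
  · intro x
    exact div_nonneg (add_nonneg (mul_nonneg hTp2 (hKm_nonneg _))
      (mul_nonneg hTm2 (hKp_nonneg _))) hJ.le
  · intro x hx
    have hzm : Kmh x = 0 := by
      apply hKm_supp
      intro hc
      have ha := (le_div_iff₀ hh).mp hc.1
      have hb := (div_le_iff₀ hh).mp hc.2
      have : |x - x₀| ≤ h := abs_le.mpr ⟨by nlinarith, by nlinarith⟩
      linarith
    have hzp : Kph x = 0 := by
      apply hKp_supp
      intro hc
      have ha := (le_div_iff₀ hh).mp hc.1
      have hb := (div_le_iff₀ hh).mp hc.2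
      have : |x - x₀| ≤ h := abs_le.mpr ⟨by nlinarith, by nlinarith⟩
      linarith
    simp only [Kh, hzm, hzp, mul_zero, add_zero, zero_div]
  · have heq : (fun ω => Kh (X ω))
        = fun ω => (Tp2 * Kmh (X ω) + Tm2 * Kph (X ω)) * J⁻¹ := by
      funext ω; simp [Kh, div_eq_mul_inv]
    rw [heq, integral_mul_const,
      integral_add (i1.const_mul _) (i2.const_mul _),
      integral_const_mul, integral_const_mul]
    have : Tp2 * Tm1 + Tm2 * Tp1 = J := by simp only [J]; ring
    rw [this, mul_inv_cancel₀ hJne]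
  · have heq : (fun ω => Kh (X ω) * (X ω - x₀))
        = fun ω => (Tp2 * (Kmh (X ω) * (X ω - x₀))
            + Tm2 * (Kph (X ω) * (X ω - x₀))) * J⁻¹ := by
      funext ω; simp only [Kh]; ring
    rw [heq, integral_mul_const,
      integral_add (i3.const_mul _) (i4.const_mul _),
      integral_const_mul, integral_const_mul]
    have h1 : (∫ ω, Kmh (X ω) * (X ω - x₀) ∂μ) = -Tm2 := by simp [Tm2]
    rw [h1]
    show (Tp2 * -Tm2 + Tm2 * Tp2) * J⁻¹ = 0
    ring
end

section
/- There exist constants 0 < c ≤ C < ∞ such that for all ν > 0 and t > 0 with ν·t ≤ 1: c·√(t/ν) ≤ Σ_{k=1}^∞ (1 − exp(−2π²k²νt))/(2π²k²ν) ≤ C·√(t/ν). -/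
/-- `1 - e^{-x} ≥ x e^{-x}` for all real `x`. -/
lemma aux_one_sub_exp_ge (x : ℝ) : x * Real.exp (-x) ≤ 1 - Real.exp (-x) := by
  have h1 := Real.add_one_le_exp x
  have h2 : 0 < Real.exp x := Real.exp_pos x
  have h3 : Real.exp (-x) = (Real.exp x)⁻¹ := Real.exp_neg x
  have h4 : Real.exp x * (Real.exp x)⁻¹ = 1 := mul_inv_cancel₀ h2.ne'
  have h5 : 0 ≤ (Real.exp x)⁻¹ := by positivity
  nlinarith [mul_nonneg (sub_nonneg.2 h1) h5]

/-- `1 - e^{-x} ≤ x` for all real `x`. -/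
lemma aux_one_sub_exp_le (x : ℝ) : 1 - Real.exp (-x) ≤ x := by
  have h1 := Real.add_one_le_exp (-x)
  linarith

set_option maxHeartbeats 1000000 in
/-- Quantitative core of Lemma A.1 (space–time white noise on the unit interval, spectral
form): there exist constants `0 < c ≤ C < ∞` such that for all `ν > 0` and `t > 0` with
`ν·t ≤ 1`,
`c √(t/ν) ≤ Σ_{k≥1} (1 − exp(−2π²k²νt)) / (2π²k²ν) ≤ C √(t/ν)`. -/
theorem white_noise_spectral_scaling :
    ∃ c C : ℝ, 0 < c ∧ c ≤ C ∧
      ∀ ν t : ℝ, 0 < ν → 0 < t → ν * t ≤ 1 →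
        c * Real.sqrt (t / ν) ≤
          (∑' k : ℕ, (1 - Real.exp (-2 * Real.pi ^ 2 * ((k : ℝ) + 1) ^ 2 * ν * t)) /
            (2 * Real.pi ^ 2 * ((k : ℝ) + 1) ^ 2 * ν)) ∧
        (∑' k : ℕ, (1 - Real.exp (-2 * Real.pi ^ 2 * ((k : ℝ) + 1) ^ 2 * ν * t)) /
            (2 * Real.pi ^ 2 * ((k : ℝ) + 1) ^ 2 * ν)) ≤
          C * Real.sqrt (t / ν) := by
  have hπ : 0 < Real.pi := Real.pi_pos
  have hπ1 : 1 ≤ Real.pi ^ 2 := by nlinarith [Real.pi_gt_three]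
  refine ⟨Real.exp (-2 * Real.pi ^ 2) / 2, 2, by positivity, ?_, ?_⟩
  · have : Real.exp (-2 * Real.pi ^ 2) ≤ 1 :=
      Real.exp_le_one_iff.2 (by nlinarith)
    linarith
  intro ν t hν ht hνt
  set f : ℕ → ℝ := fun k =>
    (1 - Real.exp (-2 * Real.pi ^ 2 * ((k : ℝ) + 1) ^ 2 * ν * t)) /
      (2 * Real.pi ^ 2 * ((k : ℝ) + 1) ^ 2 * ν) with hf_def
  have hD : ∀ k : ℕ, (0 : ℝ) < 2 * Real.pi ^ 2 * ((k : ℝ) + 1) ^ 2 * ν := fun k => by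
    positivity
  have hfnonneg : ∀ k, 0 ≤ f k := by
    intro k
    apply div_nonneg _ (hD k).le
    have : Real.exp (-2 * Real.pi ^ 2 * ((k : ℝ) + 1) ^ 2 * ν * t) ≤ 1 := by
      apply Real.exp_le_one_iff.2
      have h0 : 0 ≤ 2 * Real.pi ^ 2 * ((k : ℝ) + 1) ^ 2 * ν * t := by positivity
      linarith
    linarith
  have hfle : ∀ k, f k ≤ 1 / (2 * Real.pi ^ 2 * ((k : ℝ) + 1) ^ 2 * ν) := by
    intro k
    have hx : 0 ≤ Real.exp (-2 * Real.pi ^ 2 * ((k : ℝ) + 1) ^ 2 * ν * t) :=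
      (Real.exp_pos _).le
    exact div_le_div_of_nonneg_right (by linarith) (hD k).le
  have hflet : ∀ k, f k ≤ t := by
    intro k
    rw [hf_def]
    simp only
    rw [div_le_iff₀ (hD k)]
    have h0 := aux_one_sub_exp_le (2 * Real.pi ^ 2 * ((k : ℝ) + 1) ^ 2 * ν * t)
    have h1 : -(2 * Real.pi ^ 2 * ((k : ℝ) + 1) ^ 2 * ν * t) =
        -2 * Real.pi ^ 2 * ((k : ℝ) + 1) ^ 2 * ν * t := by ring
    rw [h1] at h0
    linarith
  -- summability
  have hg : Summable (fun k : ℕ => 1 / (2 * Real.pi ^ 2 * ((k : ℝ) + 1) ^ 2 * ν)) := by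
    have h1 : Summable (fun n : ℕ => 1 / (n : ℝ) ^ 2) :=
      Real.summable_one_div_nat_pow.2 one_lt_two
    have h2 : Summable (fun n : ℕ => 1 / ((n : ℝ) + 1) ^ 2) := by
      have h := (summable_nat_add_iff 1).2 h1
      refine h.congr fun n => ?_
      push_cast
      ring
    have h3 := h2.mul_left (1 / (2 * Real.pi ^ 2 * ν))
    refine h3.congr fun n => ?_
    have hn : (0 : ℝ) < (n : ℝ) + 1 := by positivity
    field_simp
  have hsum : Summable f := Summable.of_nonneg_of_le hfnonneg hfle hg
  -- scaling quantities
  have hνt0 : 0 < ν * t := mul_pos hν ht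
  set s : ℝ := Real.sqrt (ν * t) with hs_def
  have hs : 0 < s := Real.sqrt_pos.2 hνt0
  have hs2 : s ^ 2 = ν * t := Real.sq_sqrt hνt0.le
  have hsqrt : Real.sqrt (t / ν) = t / s := by
    rw [eq_div_iff hs.ne', hs_def, ← Real.sqrt_mul (by positivity : (0:ℝ) ≤ t / ν),
      show t / ν * (ν * t) = t ^ 2 by field_simp, Real.sqrt_sq ht.le]
  set N : ℕ := ⌊1 / s⌋₊ with hN_def
  have hN1 : 1 ≤ N := by
    apply Nat.le_floor
    rw [Nat.cast_one, le_div_iff₀ hs]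
    have hs1 : s ≤ 1 := by
      rw [hs_def, show (1 : ℝ) = Real.sqrt 1 by simp]
      exact Real.sqrt_le_sqrt hνt
    linarith
  have hN1R : (1 : ℝ) ≤ (N : ℝ) := by exact_mod_cast hN1
  have hNle : (N : ℝ) ≤ 1 / s := Nat.floor_le (by positivity)
  have hNs : (N : ℝ) * s ≤ 1 := (le_div_iff₀ hs).1 hNle
  have h2sN : 1 ≤ 2 * (N : ℝ) * s := by
    have hlt := Nat.lt_floor_add_one (1 / s)
    rw [← hN_def] at hlt
    rw [div_lt_iff₀ hs] at hlt
    nlinarith [hs.le]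
  constructor
  · -- lower bound
    have hterm : ∀ k ∈ Finset.range N, Real.exp (-2 * Real.pi ^ 2) * t ≤ f k := by
      intro k hk
      rw [Finset.mem_range] at hk
      have hkN : (k : ℝ) + 1 ≤ (N : ℝ) := by exact_mod_cast hk
      set x : ℝ := 2 * Real.pi ^ 2 * ((k : ℝ) + 1) ^ 2 * ν * t with hx_def
      have hk1 : (0 : ℝ) < (k : ℝ) + 1 := by positivity
      have hx0 : 0 < x := by rw [hx_def]; positivity
      have hks : ((k : ℝ) + 1) * s ≤ 1 := by
        calc ((k : ℝ) + 1) * s ≤ (N : ℝ) * s := by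
              exact mul_le_mul_of_nonneg_right hkN hs.le
          _ ≤ 1 := hNs
      have hxle : x ≤ 2 * Real.pi ^ 2 := by
        have h2 : ((k : ℝ) + 1) ^ 2 * (ν * t) ≤ 1 := by
          nlinarith [mul_nonneg hk1.le hs.le]
        rw [hx_def]
        nlinarith
      have hxe : Real.exp (-2 * Real.pi ^ 2) * x ≤ 1 - Real.exp (-x) := by
        have h3 : Real.exp (-2 * Real.pi ^ 2) ≤ Real.exp (-x) :=
          Real.exp_le_exp.2 (by linarith)
        have h4 := aux_one_sub_exp_ge x
        nlinarith
      have hfk : f k = (1 - Real.exp (-x)) / (2 * Real.pi ^ 2 * ((k : ℝ) + 1) ^ 2 * ν) := by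
        rw [hf_def]
        simp only
        congr 2
        rw [hx_def]
        ring
      rw [hfk, le_div_iff₀ (hD k)]
      have heq : Real.exp (-2 * Real.pi ^ 2) * t * (2 * Real.pi ^ 2 * ((k : ℝ) + 1) ^ 2 * ν)
          = Real.exp (-2 * Real.pi ^ 2) * x := by rw [hx_def]; ring
      rw [heq]
      exact hxe
    have hsum_lb : (N : ℝ) * (Real.exp (-2 * Real.pi ^ 2) * t) ≤
        ∑ i ∈ Finset.range N, f i := by
      have h := Finset.card_nsmul_le_sum (Finset.range N) f
        (Real.exp (-2 * Real.pi ^ 2) * t) hterm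
      simpa [nsmul_eq_mul] using h
    have hts := Summable.sum_le_tsum (Finset.range N) (fun i _ => hfnonneg i) hsum
    have hlow : Real.exp (-2 * Real.pi ^ 2) / 2 * (t / s) ≤
        (N : ℝ) * (Real.exp (-2 * Real.pi ^ 2) * t) := by
      have hE : 0 < Real.exp (-2 * Real.pi ^ 2) := Real.exp_pos _
      rw [show Real.exp (-2 * Real.pi ^ 2) / 2 * (t / s)
        = Real.exp (-2 * Real.pi ^ 2) * t / (2 * s) by ring,
        div_le_iff₀ (by positivity : (0:ℝ) < 2 * s)]
      nlinarith [mul_pos hE ht]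
    rw [hsqrt]
    exact hlow.trans (hsum_lb.trans hts)
  · -- upper bound
    rw [← Summable.sum_add_tsum_nat_add N hsum]
    have hS : ∑ i ∈ Finset.range N, f i ≤ (N : ℝ) * t := by
      have h := Finset.sum_le_card_nsmul (Finset.range N) f t (fun i _ => hflet i)
      simpa [nsmul_eq_mul] using h
    have hT : (∑' i : ℕ, f (i + N)) ≤ 1 / (2 * Real.pi ^ 2 * ν) * (1 / (N : ℝ)) := by
      apply Real.tsum_le_of_sum_range_le (fun i => hfnonneg _)
      intro n
      have htel : ∀ i : ℕ, f (i + N) ≤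
          1 / (2 * Real.pi ^ 2 * ν) * (1 / ((i : ℝ) + N) - 1 / ((i : ℝ) + N + 1)) := by
        intro i
        have hm : (0 : ℝ) < (i : ℝ) + N := by
          have : (0:ℝ) ≤ (i : ℝ) := Nat.cast_nonneg i
          linarith
        have hm1 : (0 : ℝ) < (i : ℝ) + N + 1 := by linarith
        have step1 : f (i + N) ≤ 1 / (2 * Real.pi ^ 2 * (((i : ℝ) + N) + 1) ^ 2 * ν) := by
          have := hfle (i + N)
          have hc : (((i + N : ℕ) : ℝ) + 1) = ((i : ℝ) + N) + 1 := by push_cast; ring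
          rwa [hc] at this
        have key : 1 / (((i : ℝ) + N) + 1) ^ 2 ≤ 1 / ((i : ℝ) + N) - 1 / ((i : ℝ) + N + 1) := by
          have k1 : 1 / (((i : ℝ) + N) + 1) ^ 2 ≤ 1 / (((i : ℝ) + N) * ((i : ℝ) + N + 1)) := by
            apply one_div_le_one_div_of_le (by positivity)
            nlinarith
          have k2 : 1 / (((i : ℝ) + N) * ((i : ℝ) + N + 1))
              = 1 / ((i : ℝ) + N) - 1 / ((i : ℝ) + N + 1) := by
            field_simp
            ring
          linarith
        calc f (i + N) ≤ 1 / (2 * Real.pi ^ 2 * (((i : ℝ) + N) + 1) ^ 2 * ν) := step1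
          _ = 1 / (2 * Real.pi ^ 2 * ν) * (1 / (((i : ℝ) + N) + 1) ^ 2) := by
              rw [div_mul_div_comm, one_mul]
              congr 1
              ring
          _ ≤ 1 / (2 * Real.pi ^ 2 * ν) * (1 / ((i : ℝ) + N) - 1 / ((i : ℝ) + N + 1)) := by
              apply mul_le_mul_of_nonneg_left key (by positivity)
      calc ∑ i ∈ Finset.range n, f (i + N)
          ≤ ∑ i ∈ Finset.range n,
            1 / (2 * Real.pi ^ 2 * ν) * (1 / ((i : ℝ) + N) - 1 / ((i : ℝ) + N + 1)) :=
            Finset.sum_le_sum fun i _ => htel i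
        _ = 1 / (2 * Real.pi ^ 2 * ν) *
            ∑ i ∈ Finset.range n, (1 / ((i : ℝ) + N) - 1 / ((i : ℝ) + N + 1)) := by
            rw [Finset.mul_sum]
        _ = 1 / (2 * Real.pi ^ 2 * ν) * (1 / ((0 : ℝ) + N) - 1 / ((n : ℝ) + N)) := by
            congr 1
            have h := Finset.sum_range_sub' (fun i : ℕ => 1 / ((i : ℝ) + N)) n
            push_cast at h
            rw [← h]
            exact Finset.sum_congr rfl fun i _ => by ring
        _ ≤ 1 / (2 * Real.pi ^ 2 * ν) * (1 / (N : ℝ)) := by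
            apply mul_le_mul_of_nonneg_left _ (by positivity)
            have hn : (0 : ℝ) < (n : ℝ) + N := by
              have : (0:ℝ) ≤ (n : ℝ) := Nat.cast_nonneg n
              linarith
            have : 0 ≤ 1 / ((n : ℝ) + N) := by positivity
            rw [zero_add]
            linarith
    have hNinv : 1 / (N : ℝ) ≤ 2 * s := by
      rw [div_le_iff₀ (by positivity : (0:ℝ) < (N:ℝ))]
      nlinarith
    have hsν : s / ν = t / s := by
      rw [div_eq_div_iff hν.ne' hs.ne']
      nlinarith
    rw [hsqrt]
    have hNt : (N : ℝ) * t ≤ t / s := by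
      rw [le_div_iff₀ hs]
      nlinarith
    have hTail : 1 / (2 * Real.pi ^ 2 * ν) * (1 / (N : ℝ)) ≤ t / s := by
      calc 1 / (2 * Real.pi ^ 2 * ν) * (1 / (N : ℝ))
          ≤ 1 / (2 * Real.pi ^ 2 * ν) * (2 * s) := by
            apply mul_le_mul_of_nonneg_left hNinv (by positivity)
        _ = (1 / Real.pi ^ 2) * (s / ν) := by
            field_simp
        _ = (1 / Real.pi ^ 2) * (t / s) := by rw [hsν]
        _ ≤ 1 * (t / s) := by
            apply mul_le_mul_of_nonneg_right _ (by positivity)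
            rw [div_le_one (by positivity)]
            exact hπ1
        _ = t / s := one_mul _
    linarith
end

section
/- For every δ ∈ (0, 1/2) there exist constants c > 0 and ε > 0 such that for all y ∈ [δ, 1 − δ] and all ν > 0, t > 0 with ν·t ≤ ε: Σ_{k=1}^∞ sin²(kπy)·(1 − exp(−2π²k²νt))/(π²k²ν) ≥ c·√(t/ν). -/
set_option maxHeartbeats 1000000

/-- Chord bound: on `[0,1]`, `exp (-x) ≤ 1 - (1 - e⁻¹) x`, by convexity of `exp`. -/
private lemma exp_neg_le_chord (x : ℝ) (h0 : 0 ≤ x) (h1 : x ≤ 1) :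
    Real.exp (-x) ≤ 1 - (1 - Real.exp (-1)) * x := by
  have h := convexOn_exp.2 (Set.mem_univ (0:ℝ)) (Set.mem_univ (-1:ℝ))
    (by linarith : (0:ℝ) ≤ 1 - x) h0 (by ring)
  simp only [smul_eq_mul, mul_zero, zero_add, mul_neg, mul_one, Real.exp_zero] at h
  linarith

/-- `sin² (v - u) ≤ 2 (sin² u + sin² v)`. -/
private lemma sin_sq_sub_le (u v : ℝ) :
    Real.sin (v - u) ^ 2 ≤ 2 * (Real.sin u ^ 2 + Real.sin v ^ 2) := by
  rw [Real.sin_sub]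
  nlinarith [Real.sin_sq_add_cos_sq u, Real.sin_sq_add_cos_sq v,
    sq_nonneg (Real.sin v * Real.cos u + Real.cos v * Real.sin u),
    sq_nonneg (Real.sin u), sq_nonneg (Real.sin v),
    sq_nonneg (Real.sin v * Real.cos u), sq_nonneg (Real.cos v * Real.sin u),
    mul_nonneg (sq_nonneg (Real.sin v)) (sq_nonneg (Real.sin u))]

/-- `sin (π δ) ≤ sin (π y)` for `y ∈ [δ, 1-δ]`. -/
private lemma sin_pi_mul_ge {δ y : ℝ} (hδ0 : 0 < δ) (hδ : δ < 1/2)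
    (h1 : δ ≤ y) (h2 : y ≤ 1 - δ) : Real.sin (Real.pi * δ) ≤ Real.sin (Real.pi * y) := by
  have hπ := Real.pi_pos
  have hδmem : Real.pi * δ ∈ Set.Icc (-(Real.pi/2)) (Real.pi/2) := by
    constructor <;> nlinarith
  rcases le_or_gt (Real.pi * y) (Real.pi / 2) with h | h
  · exact Real.strictMonoOn_sin.monotoneOn hδmem
      (by constructor <;> nlinarith) (by nlinarith)
  · rw [show Real.pi * y = Real.pi - Real.pi * (1 - y) by ring, Real.sin_pi_sub]
    exact Real.strictMonoOn_sin.monotoneOn hδmem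
      (by constructor <;> nlinarith) (by nlinarith)

/-- Pairing lower bound for the partial sums of `sin² ((k+1) π y)`. -/
private lemma pair_sum (y : ℝ) (m : ℕ) :
    (m : ℝ) * (Real.sin (Real.pi * y) ^ 2 / 2) ≤
      ∑ k ∈ Finset.range (2 * m), Real.sin (((k : ℝ) + 1) * Real.pi * y) ^ 2 := by
  induction m with
  | zero => simp
  | succ n ih =>
    rw [show 2 * (n + 1) = (2 * n) + 1 + 1 by ring, Finset.sum_range_succ,
      Finset.sum_range_succ]
    have key := sin_sq_sub_le ((((2*n : ℕ) : ℝ) + 1) * Real.pi * y)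
      ((((2*n+1 : ℕ) : ℝ) + 1) * Real.pi * y)
    have harg : (((2*n+1 : ℕ) : ℝ) + 1) * Real.pi * y - (((2*n : ℕ) : ℝ) + 1) * Real.pi * y
        = Real.pi * y := by push_cast; ring
    rw [harg] at key
    push_cast at key ih ⊢
    linarith

/-- Lower bound of Lemma A.1 in spectral form for the Dirichlet heat kernel on `(0,1)`:
for every `δ ∈ (0, 1/2)` there exist `c > 0` and `ε > 0` such that for all
`y ∈ [δ, 1 − δ]` and all `ν > 0`, `t > 0` with `ν·t ≤ ε`,
`c √(t/ν) ≤ Σ_{k≥1} sin²(kπy) (1 − exp(−2π²k²νt)) / (π²k²ν)`. -/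
theorem dirichlet_spectral_lower_bound (δ : ℝ) (hδ0 : 0 < δ) (hδ : δ < 1 / 2) :
    ∃ c ε : ℝ, 0 < c ∧ 0 < ε ∧
      ∀ y ν t : ℝ, y ∈ Set.Icc δ (1 - δ) → 0 < ν → 0 < t → ν * t ≤ ε →
        c * Real.sqrt (t / ν) ≤
          ∑' k : ℕ, Real.sin (((k : ℝ) + 1) * Real.pi * y) ^ 2 *
            (1 - Real.exp (-2 * Real.pi ^ 2 * ((k : ℝ) + 1) ^ 2 * ν * t)) /
            (Real.pi ^ 2 * ((k : ℝ) + 1) ^ 2 * ν) := by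
  have hπ := Real.pi_pos
  have hE : Real.exp (-1) < 1 := Real.exp_lt_one_iff.2 (by norm_num)
  have hsδ : 0 < Real.sin (Real.pi * δ) :=
    Real.sin_pos_of_pos_of_lt_pi (by positivity) (by nlinarith)
  set C0 : ℝ := (1 - Real.exp (-1)) * Real.sin (Real.pi * δ) ^ 2 with hC0def
  have hC0 : 0 < C0 := by
    apply mul_pos (by linarith) (by positivity)
  refine ⟨C0 / (4 * Real.sqrt 2 * Real.pi), 1 / (32 * Real.pi ^ 2),
    by positivity, by positivity, ?_⟩
  rintro y ν t ⟨hy1, hy2⟩ hν ht hε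
  -- setup
  set q : ℝ := Real.sqrt (2 * (ν * t)) with hqdef
  have hq0 : 0 < q := Real.sqrt_pos.2 (by positivity)
  have hq2 : q ^ 2 = 2 * (ν * t) := Real.sq_sqrt (by positivity)
  have hqle : q ≤ 1 / (4 * Real.pi) := by
    have h1 : 2 * (ν * t) ≤ (1 / (4 * Real.pi)) ^ 2 := by
      have h2 : (1 / (4 * Real.pi)) ^ 2 = 2 * (1 / (32 * Real.pi ^ 2)) := by
        field_simp; ring
      rw [h2]
      linarith
    calc q ≤ Real.sqrt ((1 / (4 * Real.pi)) ^ 2) := Real.sqrt_le_sqrt h1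
      _ = 1 / (4 * Real.pi) := Real.sqrt_sq (by positivity)
  set x : ℝ := 1 / (2 * Real.pi * q) with hxdef
  have hx0 : 0 < x := by positivity
  have hx2 : 2 ≤ x := by
    rw [hxdef, le_div_iff₀ (by positivity)]
    have h14 : 4 * Real.pi * (1 / (4 * Real.pi)) = 1 := by field_simp
    nlinarith [mul_le_mul_of_nonneg_left hqle (by positivity : (0:ℝ) ≤ 4 * Real.pi)]
  set m : ℕ := ⌊x⌋₊ with hmdef
  have hm_lb : x / 2 ≤ (m : ℝ) := by
    have := Nat.sub_one_lt_floor x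
    rw [← hmdef] at this
    linarith
  -- the summand
  set f : ℕ → ℝ := fun k => Real.sin (((k : ℝ) + 1) * Real.pi * y) ^ 2 *
      (1 - Real.exp (-2 * Real.pi ^ 2 * ((k : ℝ) + 1) ^ 2 * ν * t)) /
      (Real.pi ^ 2 * ((k : ℝ) + 1) ^ 2 * ν) with hfdef
  have hf_nonneg : ∀ k : ℕ, 0 ≤ f k := by
    intro k
    have hk1 : (0:ℝ) < (k : ℝ) + 1 := by positivity
    have hexp : Real.exp (-2 * Real.pi ^ 2 * ((k : ℝ) + 1) ^ 2 * ν * t) ≤ 1 := by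
      apply Real.exp_le_one_iff.2
      have hp : 0 ≤ 2 * Real.pi ^ 2 * ((k : ℝ) + 1) ^ 2 * ν * t := by positivity
      nlinarith
    apply div_nonneg (mul_nonneg (sq_nonneg _) (by linarith)) (by positivity)
  have hgsum : Summable (fun k : ℕ => (1 / (Real.pi ^ 2 * ν)) * (1 / ((k : ℝ) + 1) ^ 2)) := by
    apply Summable.mul_left
    have h2 : Summable (fun n : ℕ => 1 / (n : ℝ) ^ 2) :=
      Real.summable_one_div_nat_pow.2 (by norm_num)
    have := (summable_nat_add_iff 1).2 h2
    apply this.congr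
    intro n
    push_cast
    ring
  have hf_le : ∀ k : ℕ, f k ≤ (1 / (Real.pi ^ 2 * ν)) * (1 / ((k : ℝ) + 1) ^ 2) := by
    intro k
    have hk1 : (0:ℝ) < (k : ℝ) + 1 := by positivity
    have hnum : Real.sin (((k : ℝ) + 1) * Real.pi * y) ^ 2 *
        (1 - Real.exp (-2 * Real.pi ^ 2 * ((k : ℝ) + 1) ^ 2 * ν * t)) ≤ 1 := by
      have h1 : Real.sin (((k : ℝ) + 1) * Real.pi * y) ^ 2 ≤ 1 := Real.sin_sq_le_one _
      have h2 : 0 < Real.exp (-2 * Real.pi ^ 2 * ((k : ℝ) + 1) ^ 2 * ν * t) :=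
        Real.exp_pos _
      nlinarith [sq_nonneg (Real.sin (((k : ℝ) + 1) * Real.pi * y))]
    have heq : (1 / (Real.pi ^ 2 * ν)) * (1 / ((k : ℝ) + 1) ^ 2) =
        1 / (Real.pi ^ 2 * ((k : ℝ) + 1) ^ 2 * ν) := by
      field_simp
    rw [heq]
    simp only [hfdef]
    exact div_le_div_of_nonneg_right hnum (by positivity)
  have hf_sum : Summable f := Summable.of_nonneg_of_le hf_nonneg hf_le hgsum
  have hsum_le : ∑ k ∈ Finset.range (2 * m), f k ≤ ∑' k, f k :=
    Summable.sum_le_tsum _ (fun k _ => hf_nonneg k) hf_sum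
  -- termwise lower bound on the range
  have hterm : ∀ k ∈ Finset.range (2 * m),
      2 * (1 - Real.exp (-1)) * t * Real.sin (((k : ℝ) + 1) * Real.pi * y) ^ 2 ≤ f k := by
    intro k hk
    have hkm : (k : ℝ) + 1 ≤ 2 * (m : ℝ) := by
      have := Finset.mem_range.1 hk
      have : (k : ℕ) + 1 ≤ 2 * m := this
      exact_mod_cast this
    have hmx : (m : ℝ) ≤ x := Nat.floor_le hx0.le
    have hn2x : (k : ℝ) + 1 ≤ 1 / (Real.pi * q) := by
      have : 2 * x = 1 / (Real.pi * q) := by rw [hxdef]; field_simp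
      linarith
    have hn1 : (0:ℝ) < (k : ℝ) + 1 := by positivity
    have hpq : Real.pi * q * ((k : ℝ) + 1) ≤ 1 := by
      rw [le_div_iff₀ (by positivity)] at hn2x
      linarith [hn2x]
    have hX1 : 2 * Real.pi ^ 2 * ((k : ℝ) + 1) ^ 2 * ν * t ≤ 1 := by
      have heqsq : (Real.pi * q * ((k : ℝ) + 1)) ^ 2 =
          2 * Real.pi ^ 2 * ((k : ℝ) + 1) ^ 2 * ν * t := by
        rw [mul_pow, mul_pow, hq2]; ring
      have hpqn : (0:ℝ) ≤ Real.pi * q * ((k : ℝ) + 1) := by positivity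
      nlinarith [heqsq, hpq, hpqn]
    have hX0 : 0 ≤ 2 * Real.pi ^ 2 * ((k : ℝ) + 1) ^ 2 * ν * t := by positivity
    have hchord := exp_neg_le_chord _ hX0 hX1
    have hexplb : (1 - Real.exp (-1)) * (2 * Real.pi ^ 2 * ((k : ℝ) + 1) ^ 2 * ν * t) ≤
        1 - Real.exp (-2 * Real.pi ^ 2 * ((k : ℝ) + 1) ^ 2 * ν * t) := by
      have : -2 * Real.pi ^ 2 * ((k : ℝ) + 1) ^ 2 * ν * t =
          -(2 * Real.pi ^ 2 * ((k : ℝ) + 1) ^ 2 * ν * t) := by ring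
      rw [this]
      linarith
    have hrw : 2 * (1 - Real.exp (-1)) * t * Real.sin (((k : ℝ) + 1) * Real.pi * y) ^ 2 =
        Real.sin (((k : ℝ) + 1) * Real.pi * y) ^ 2 *
          ((1 - Real.exp (-1)) * (2 * Real.pi ^ 2 * ((k : ℝ) + 1) ^ 2 * ν * t)) /
          (Real.pi ^ 2 * ((k : ℝ) + 1) ^ 2 * ν) := by
      field_simp
    rw [hrw]
    simp only [hfdef]
    exact div_le_div_of_nonneg_right
      (mul_le_mul_of_nonneg_left hexplb (sq_nonneg _)) (by positivity)
  have hsum1 : ∑ k ∈ Finset.range (2 * m),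
      2 * (1 - Real.exp (-1)) * t * Real.sin (((k : ℝ) + 1) * Real.pi * y) ^ 2 ≤
      ∑ k ∈ Finset.range (2 * m), f k := Finset.sum_le_sum hterm
  have hpair := pair_sum y m
  have hfactor : ∑ k ∈ Finset.range (2 * m),
      2 * (1 - Real.exp (-1)) * t * Real.sin (((k : ℝ) + 1) * Real.pi * y) ^ 2 =
      2 * (1 - Real.exp (-1)) * t *
        ∑ k ∈ Finset.range (2 * m), Real.sin (((k : ℝ) + 1) * Real.pi * y) ^ 2 :=
    (Finset.mul_sum _ _ _).symm
  have hcoef : (0:ℝ) ≤ 2 * (1 - Real.exp (-1)) * t := by nlinarith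
  have hsiny : Real.sin (Real.pi * δ) ^ 2 ≤ Real.sin (Real.pi * y) ^ 2 := by
    have := sin_pi_mul_ge hδ0 hδ hy1 hy2
    nlinarith
  -- lower bound: (1-e⁻¹) sin(πδ)² t m ≤ partial sum
  have hmain : C0 * t * (m : ℝ) ≤ ∑ k ∈ Finset.range (2 * m), f k := by
    have h1 : 2 * (1 - Real.exp (-1)) * t * ((m : ℝ) * (Real.sin (Real.pi * y) ^ 2 / 2)) ≤
        ∑ k ∈ Finset.range (2 * m), f k := by
      calc 2 * (1 - Real.exp (-1)) * t * ((m : ℝ) * (Real.sin (Real.pi * y) ^ 2 / 2))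
          ≤ 2 * (1 - Real.exp (-1)) * t *
            ∑ k ∈ Finset.range (2 * m), Real.sin (((k : ℝ) + 1) * Real.pi * y) ^ 2 :=
            mul_le_mul_of_nonneg_left hpair hcoef
        _ = _ := hfactor.symm
        _ ≤ _ := hsum1
    have h2 : C0 * t * (m : ℝ) ≤
        2 * (1 - Real.exp (-1)) * t * ((m : ℝ) * (Real.sin (Real.pi * y) ^ 2 / 2)) := by
      rw [hC0def]
      have hm0 : (0:ℝ) ≤ (m : ℝ) := Nat.cast_nonneg m
      nlinarith [mul_nonneg (mul_nonneg (by linarith : (0:ℝ) ≤ 1 - Real.exp (-1)) ht.le) hm0]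
    linarith
  -- final constant computation
  have hkey : Real.sqrt (t / ν) * q = Real.sqrt 2 * t := by
    rw [hqdef, ← Real.sqrt_mul (by positivity)]
    have : t / ν * (2 * (ν * t)) = 2 * t ^ 2 := by field_simp
    rw [this, Real.sqrt_mul (by norm_num), Real.sqrt_sq ht.le]
  have h4 : 1 ≤ 4 * Real.pi * q * (m : ℝ) := by
    have hx4 : x / 2 = 1 / (4 * Real.pi * q) := by rw [hxdef]; field_simp; ring
    rw [hx4] at hm_lb
    rw [div_le_iff₀ (by positivity)] at hm_lb
    linarith [hm_lb]
  have hS0 : 0 ≤ Real.sqrt (t / ν) := Real.sqrt_nonneg _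
  have hfinal : C0 / (4 * Real.sqrt 2 * Real.pi) * Real.sqrt (t / ν) ≤ C0 * t * (m : ℝ) := by
    rw [div_mul_eq_mul_div, div_le_iff₀ (by positivity)]
    have step1 : C0 * Real.sqrt (t / ν) ≤ C0 * Real.sqrt (t / ν) * (4 * Real.pi * q * (m : ℝ)) :=
      le_mul_of_one_le_right (by positivity) h4
    have step2 : C0 * Real.sqrt (t / ν) * (4 * Real.pi * q * (m : ℝ)) =
        C0 * t * (m : ℝ) * (4 * Real.sqrt 2 * Real.pi) := by
      have : C0 * Real.sqrt (t / ν) * (4 * Real.pi * q * (m : ℝ)) =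
          C0 * (4 * Real.pi * (m : ℝ)) * (Real.sqrt (t / ν) * q) := by ring
      rw [this, hkey]; ring
    linarith [step1, step2.le, step2.ge]
  calc C0 / (4 * Real.sqrt 2 * Real.pi) * Real.sqrt (t / ν)
      ≤ C0 * t * (m : ℝ) := hfinal
    _ ≤ ∑ k ∈ Finset.range (2 * m), f k := hmain
    _ ≤ ∑' k, f k := hsum_le
end

section
/- There exist constants 0 < c ≤ C < ∞ and ε > 0 such that for all y ∈ [0, 1] and all ν > 0, t > 0 with ν·t ≤ ε: c·√(t/ν) ≤ t + Σ_{k=1}^∞ cos²(kπy)·(1 − exp(−2π²k²νt))/(π²k²ν) ≤ C·√(t/ν). In particular, for the Neumann case both the upper and the lower bound hold uniformly over the entire interval [0, 1], not only on a subinterval separated from the boundary. -/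
/-!
With `a = ν t` the quantity equals `ν⁻¹ (a + ∑_{n ≥ 1} cos² (nπy) (1 - e^{-2π²n²a}) / (π²n²))` and
`√(t/ν) = √a / ν`, so it suffices to show that the bracket is of order `√a` for `0 < a ≤ 1`,
uniformly in `y`. Fix `N ≈ a^{-1/2}`.

Upper bound: each term is at most `2a` (as `1 - e^{-x} ≤ x`) and at most `1/n²`, so the modes
`n ≤ N` contribute `O(N a) = O(√a)` and the others `O(1/N) = O(√a)`.

Lower bound: for `n ≥ N` the factor `1 - e^{-2π²n²a}` is at least `1/2`. The weight `cos² (nπy)`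
may vanish, but `cos² b + cos² (2b) ≥ 1/4` for every `b`, so each pair of modes `(m, 2m)` with
`N ≤ m < 2N` contributes at least `1 / (128 π² N²)`; these `N` disjoint pairs give `≳ √a`.
-/

open Real Finset

theorem cos_sq_add_cos_two_mul_sq_ge (b : ℝ) : 1 / 4 ≤ cos b ^ 2 + cos (2 * b) ^ 2 := by
  rw [cos_two_mul]
  nlinarith [sq_nonneg (4 * cos b ^ 2 - 3 / 2)]

theorem one_sub_exp_neg_nonneg {x : ℝ} (hx : 0 ≤ x) : 0 ≤ 1 - exp (-x) :=
  sub_nonneg.mpr (exp_le_one_iff.mpr (neg_nonpos.mpr hx))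

theorem sum_Ico_add_two_mul_le_tsum {f : ℕ → ℝ} (hf : ∀ n, 0 ≤ f n) (hs : Summable f)
    (N : ℕ) :
    ∑ m ∈ Ico N (2 * N), (f m + f (2 * m)) ≤ ∑' n, f n := by
  have hdisj : Disjoint (Ico N (2 * N)) ((Ico N (2 * N)).image (2 * ·)) := by
    simp only [disjoint_left, mem_image, mem_Ico]
    omega
  calc ∑ m ∈ Ico N (2 * N), (f m + f (2 * m))
      = ∑ n ∈ Ico N (2 * N) ∪ (Ico N (2 * N)).image (2 * ·), f n := by
        rw [sum_union hdisj, sum_image fun _ _ _ _ h => by omega, sum_add_distrib]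
    _ ≤ ∑' n, f n := hs.sum_le_tsum _ fun n _ => hf n

theorem tsum_le_of_le_of_le_inv_sq {f : ℕ → ℝ} {b : ℝ} (hf : ∀ n, 0 ≤ f n) (hb : ∀ n, f n ≤ b)
    (hsq : ∀ n, f n ≤ ((n : ℝ) ^ 2)⁻¹) (N : ℕ) :
    ∑' n, f n ≤ (N + 1) * b + 2 / (N + 1) := by
  refine Real.tsum_le_of_sum_range_le hf fun M => ?_
  rw [← sum_filter_add_sum_filter_not (range M) (· ≤ N)]
  gcongr
  · calc ∑ n ∈ (range M).filter (· ≤ N), f n ≤ ∑ n ∈ range (N + 1), f n :=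
          sum_le_sum_of_subset_of_nonneg (by intro n; simp only [mem_filter, mem_range]; omega)
            fun n _ _ => hf n
      _ ≤ (N + 1) * b := by simpa using sum_le_card_nsmul (range (N + 1)) f b fun n _ => hb n
  · calc ∑ n ∈ (range M).filter (¬ · ≤ N), f n ≤ ∑ n ∈ Ioo N M, ((n : ℝ) ^ 2)⁻¹ :=
          (sum_le_sum fun n _ => hsq n).trans <| sum_le_sum_of_subset_of_nonneg
            (by intro n; simp only [mem_filter, mem_range, mem_Ioo]; omega)
            fun n _ _ => by positivity
      _ ≤ 2 / (N + 1) := sum_Ioo_inv_sq_le N M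

theorem exists_nat_mul_mem_Icc {s : ℝ} (hs : 0 < s) (hs1 : s ≤ 1) :
    ∃ N : ℕ, N * s ∈ Set.Icc 1 2 := by
  refine ⟨⌈s⁻¹⌉₊, ?_, ?_⟩
  · rw [← inv_mul_cancel₀ hs.ne']
    exact mul_le_mul_of_nonneg_right (Nat.le_ceil _) hs.le
  · have := Nat.ceil_lt_add_one (inv_nonneg.mpr hs.le)
    calc (⌈s⁻¹⌉₊ : ℝ) * s ≤ (s⁻¹ + 1) * s := by gcongr
      _ = 1 + s := by field_simp
      _ ≤ 2 := by linarith

noncomputable def neumannTerm (a y : ℝ) (n : ℕ) : ℝ :=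
  cos (n * π * y) ^ 2 * (1 - exp (-(2 * π ^ 2 * n ^ 2 * a))) / (π ^ 2 * n ^ 2)

section neumannTerm

variable {a : ℝ} (y : ℝ)

theorem neumannTerm_zero : neumannTerm a y 0 = 0 := by
  simp [neumannTerm]

theorem neumannTerm_nonneg (ha : 0 ≤ a) (n : ℕ) : 0 ≤ neumannTerm a y n := by
  have := one_sub_exp_neg_nonneg (x := 2 * π ^ 2 * n ^ 2 * a) (by positivity)
  unfold neumannTerm
  positivity

theorem neumannTerm_le_two_mul (ha : 0 ≤ a) (n : ℕ) : neumannTerm a y n ≤ 2 * a := by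
  rcases eq_or_ne n 0 with rfl | hn
  · simpa [neumannTerm_zero] using ha
  rw [neumannTerm, div_le_iff₀ (by positivity)]
  calc cos (n * π * y) ^ 2 * (1 - exp (-(2 * π ^ 2 * n ^ 2 * a)))
      ≤ 1 * (2 * π ^ 2 * n ^ 2 * a) := by
        gcongr
        · exact one_sub_exp_neg_nonneg (by positivity)
        · exact cos_sq_le_one _
        · linarith [one_sub_le_exp_neg (2 * π ^ 2 * n ^ 2 * a)]
    _ = 2 * a * (π ^ 2 * n ^ 2) := by ring

theorem neumannTerm_le_inv_sq (ha : 0 ≤ a) (n : ℕ) : neumannTerm a y n ≤ ((n : ℝ) ^ 2)⁻¹ := by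
  rcases eq_or_ne n 0 with rfl | hn
  · simp [neumannTerm_zero]
  rw [neumannTerm, div_le_iff₀ (by positivity)]
  calc cos (n * π * y) ^ 2 * (1 - exp (-(2 * π ^ 2 * n ^ 2 * a))) ≤ 1 * 1 := by
        gcongr
        · exact one_sub_exp_neg_nonneg (by positivity)
        · exact cos_sq_le_one _
        · linarith [exp_pos (-(2 * π ^ 2 * n ^ 2 * a))]
    _ ≤ π ^ 2 := by nlinarith [pi_gt_three]
    _ = ((n : ℝ) ^ 2)⁻¹ * (π ^ 2 * n ^ 2) := by field_simp

theorem summable_neumannTerm (ha : 0 ≤ a) : Summable (neumannTerm a y) :=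
  .of_nonneg_of_le (neumannTerm_nonneg y ha) (neumannTerm_le_inv_sq y ha)
    (Real.summable_nat_pow_inv.mpr one_lt_two)

theorem tsum_neumannTerm_succ (ha : 0 ≤ a) :
    ∑' k : ℕ, neumannTerm a y (k + 1) = ∑' n, neumannTerm a y n := by
  rw [(summable_neumannTerm y ha).tsum_eq_zero_add, neumannTerm_zero, zero_add]

theorem div_le_neumannTerm {n : ℕ} (hn : 1 ≤ n ^ 2 * a) :
    cos (n * π * y) ^ 2 / (2 * π ^ 2 * n ^ 2) ≤ neumannTerm a y n := by
  have hn0 : (n : ℝ) ≠ 0 := by rintro h; norm_num [h] at hn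
  have hexp : exp (-(2 * π ^ 2 * n ^ 2 * a)) ≤ 1 / 2 := calc
    exp (-(2 * π ^ 2 * n ^ 2 * a)) ≤ exp (-1) := by
      gcongr; nlinarith [pi_gt_three]
    _ ≤ 1 / 2 := by
      rw [exp_neg, inv_le_comm₀ (exp_pos 1) (by norm_num)]
      linarith [add_one_le_exp 1]
  rw [neumannTerm, div_le_div_iff₀ (by positivity) (by positivity)]
  calc cos (n * π * y) ^ 2 * (π ^ 2 * n ^ 2)
      = cos (n * π * y) ^ 2 * 1 * (π ^ 2 * n ^ 2) := by ring
    _ ≤ cos (n * π * y) ^ 2 * (2 * (1 - exp (-(2 * π ^ 2 * n ^ 2 * a)))) * (π ^ 2 * n ^ 2) := by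
        gcongr; linarith
    _ = _ := by ring

theorem inv_le_neumannTerm_add_two_mul {m : ℕ} (hm : 1 ≤ m ^ 2 * a) :
    (32 * π ^ 2 * m ^ 2)⁻¹ ≤ neumannTerm a y m + neumannTerm a y (2 * m) := by
  have hm0 : (m : ℝ) ≠ 0 := by rintro h; norm_num [h] at hm
  have h1 := div_le_neumannTerm y hm
  have h2 := div_le_neumannTerm y (a := a) (n := 2 * m) (by push_cast; nlinarith)
  push_cast at h2
  rw [show 2 * (m : ℝ) * π * y = 2 * (m * π * y) by ring] at h2
  have hpair := cos_sq_add_cos_two_mul_sq_ge (m * π * y)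
  calc (32 * π ^ 2 * m ^ 2)⁻¹ = (1 / 4) / (8 * π ^ 2 * m ^ 2) := by field_simp; ring
    _ ≤ (cos (m * π * y) ^ 2 + cos (2 * (m * π * y)) ^ 2) / (8 * π ^ 2 * m ^ 2) := by gcongr
    _ ≤ cos (m * π * y) ^ 2 / (2 * π ^ 2 * m ^ 2)
          + cos (2 * (m * π * y)) ^ 2 / (2 * π ^ 2 * (2 * m) ^ 2) := by
        rw [add_div, show 2 * π ^ 2 * (2 * (m : ℝ)) ^ 2 = 8 * π ^ 2 * m ^ 2 by ring]
        gcongr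
        linarith
    _ ≤ _ := add_le_add h1 h2

theorem sqrt_div_le_tsum_neumannTerm (ha : 0 < a) (ha1 : a ≤ 1) :
    √a / (256 * π ^ 2) ≤ ∑' n, neumannTerm a y n := by
  obtain ⟨N, hN1, hN2⟩ := exists_nat_mul_mem_Icc (sqrt_pos.mpr ha) (sqrt_le_one.mpr ha1)
  have hN : (0 : ℝ) < N :=
    Nat.cast_pos.mpr (Nat.pos_of_ne_zero (by rintro rfl; norm_num at hN1))
  have hNa : 1 ≤ (N : ℝ) ^ 2 * a := by
    rw [← sq_sqrt ha.le, ← mul_pow]; nlinarith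
  calc √a / (256 * π ^ 2) ≤ N * (128 * π ^ 2 * N ^ 2)⁻¹ := by
        rw [div_le_iff₀ (by positivity)]
        field_simp
        nlinarith [pi_pos]
    _ = ∑ m ∈ Ico N (2 * N), (128 * π ^ 2 * N ^ 2)⁻¹ := by
        rw [sum_const, Nat.card_Ico, two_mul, Nat.add_sub_cancel, nsmul_eq_mul]
    _ ≤ ∑ m ∈ Ico N (2 * N), (neumannTerm a y m + neumannTerm a y (2 * m)) := by
        refine sum_le_sum fun m hm => ?_
        rw [mem_Ico] at hm
        have hNm : (N : ℝ) ≤ m := by exact_mod_cast hm.1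
        have hm2N : (m : ℝ) ≤ 2 * N := by exact_mod_cast hm.2.le
        have hm0 : (0 : ℝ) < m := hN.trans_le hNm
        calc (128 * π ^ 2 * N ^ 2)⁻¹ = (32 * π ^ 2 * (2 * N) ^ 2)⁻¹ := by ring
          _ ≤ (32 * π ^ 2 * m ^ 2)⁻¹ := by gcongr
          _ ≤ _ := inv_le_neumannTerm_add_two_mul y (hNa.trans (by gcongr))
    _ ≤ ∑' n, neumannTerm a y n :=
        sum_Ico_add_two_mul_le_tsum (neumannTerm_nonneg y ha.le) (summable_neumannTerm y ha.le) N

theorem add_tsum_neumannTerm_le (ha : 0 < a) (ha1 : a ≤ 1) :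
    a + ∑' n, neumannTerm a y n ≤ 9 * √a := by
  obtain ⟨N, hN1, hN2⟩ := exists_nat_mul_mem_Icc (sqrt_pos.mpr ha) (sqrt_le_one.mpr ha1)
  have hsum := tsum_le_of_le_of_le_inv_sq (neumannTerm_nonneg y ha.le)
    (neumannTerm_le_two_mul y ha.le) (neumannTerm_le_inv_sq y ha.le) N
  set s := √a
  have hs1 : s ≤ 1 := sqrt_le_one.mpr ha1
  have haa : a = s * s := (mul_self_sqrt ha.le).symm
  have head : (N + 1) * (2 * a) ≤ 6 * s := by rw [haa]; nlinarith
  have tail : 2 / ((N : ℝ) + 1) ≤ 2 * s := by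
    rw [div_le_iff₀ (by positivity)]; nlinarith
  have ha_le : a ≤ s := by rw [haa]; nlinarith
  linarith

end neumannTerm

theorem add_tsum_cos_sq_eq_div (y : ℝ) {ν t : ℝ} (hν : 0 < ν) (ht : 0 ≤ t) :
    t + ∑' k : ℕ, cos (((k : ℝ) + 1) * π * y) ^ 2 *
        (1 - exp (-2 * π ^ 2 * ((k : ℝ) + 1) ^ 2 * ν * t)) / (π ^ 2 * ((k : ℝ) + 1) ^ 2 * ν) =
      (ν * t + ∑' n, neumannTerm (ν * t) y n) / ν := by
  have hterm : ∀ k : ℕ, cos (((k : ℝ) + 1) * π * y) ^ 2 *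
      (1 - exp (-2 * π ^ 2 * ((k : ℝ) + 1) ^ 2 * ν * t)) / (π ^ 2 * ((k : ℝ) + 1) ^ 2 * ν) =
      neumannTerm (ν * t) y (k + 1) / ν := by
    intro k
    rw [neumannTerm, div_div, Nat.cast_succ, show -(2 * π ^ 2 * ((k : ℝ) + 1) ^ 2 * (ν * t)) =
      -2 * π ^ 2 * ((k : ℝ) + 1) ^ 2 * ν * t by ring]
  simp_rw [hterm, tsum_div_const, tsum_neumannTerm_succ y (mul_nonneg hν.le ht)]
  field_simp

theorem sqrt_div_eq_sqrt_mul_div {ν : ℝ} (hν : 0 < ν) (t : ℝ) : √(t / ν) = √(ν * t) / ν := by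
  rw [show t / ν = ν * t / ν ^ 2 by field_simp, sqrt_div' _ (sq_nonneg ν), sqrt_sq hν.le]

/-- Lemma A.5 (Example 2.5(d)) in spectral form for the Neumann heat kernel on `(0,1)`:
there exist constants `0 < c ≤ C < ∞` and `ε > 0` such that for all `y ∈ [0,1]` and all
`ν > 0`, `t > 0` with `ν·t ≤ ε`,
`c √(t/ν) ≤ t + Σ_{k≥1} cos²(kπy) (1 − exp(−2π²k²νt)) / (π²k²ν) ≤ C √(t/ν)`.
In the Neumann case both bounds hold uniformly over the whole interval `[0,1]`. -/
theorem neumann_spectral_two_sided_bound :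
    ∃ c C ε : ℝ, 0 < c ∧ c ≤ C ∧ 0 < ε ∧
      ∀ y ν t : ℝ, y ∈ Set.Icc (0 : ℝ) 1 → 0 < ν → 0 < t → ν * t ≤ ε →
        c * Real.sqrt (t / ν) ≤
          (t + ∑' k : ℕ, Real.cos (((k : ℝ) + 1) * Real.pi * y) ^ 2 *
            (1 - Real.exp (-2 * Real.pi ^ 2 * ((k : ℝ) + 1) ^ 2 * ν * t)) /
            (Real.pi ^ 2 * ((k : ℝ) + 1) ^ 2 * ν)) ∧
        (t + ∑' k : ℕ, Real.cos (((k : ℝ) + 1) * Real.pi * y) ^ 2 *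
            (1 - Real.exp (-2 * Real.pi ^ 2 * ((k : ℝ) + 1) ^ 2 * ν * t)) /
            (Real.pi ^ 2 * ((k : ℝ) + 1) ^ 2 * ν)) ≤
          C * Real.sqrt (t / ν) := by
  refine ⟨(256 * π ^ 2)⁻¹, 9, 1, by positivity, ?_, one_pos, ?_⟩
  · calc (256 * π ^ 2)⁻¹ ≤ 1 := inv_le_one_of_one_le₀ (by nlinarith [pi_gt_three])
      _ ≤ 9 := by norm_num
  intro y ν t _ hν ht hνt
  have ha : 0 < ν * t := mul_pos hν ht
  rw [add_tsum_cos_sq_eq_div y hν ht.le, sqrt_div_eq_sqrt_mul_div hν, mul_div_assoc',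
    mul_div_assoc']
  constructor
  · gcongr
    calc (256 * π ^ 2)⁻¹ * √(ν * t) = √(ν * t) / (256 * π ^ 2) := by ring
      _ ≤ ∑' n, neumannTerm (ν * t) y n := sqrt_div_le_tsum_neumannTerm y ha hνt
      _ ≤ ν * t + ∑' n, neumannTerm (ν * t) y n := le_add_of_nonneg_left ha.le
  · gcongr
    exact add_tsum_neumannTerm_le y ha hνt
end

section
/- Let ρ₁ > 0 and ρ₂ ∈ [0, 1/2) with ρ₁ + 2ρ₂ > 1, and let (λ_k)_{k≥1}, (σ_k)_{k≥1} be positive sequences satisfying c₁·k^{ρ₁} ≤ λ_k ≤ c₂·k^{ρ₁} and c₃·k^{−ρ₂} ≤ σ_k ≤ c₄·k^{−ρ₂} for all k ≥ 1 and fixed constants 0 < c₁ ≤ c₂ and 0 < c₃ ≤ c₄. Then there exist constants 0 < c ≤ C < ∞ (depending only on ρ₁, ρ₂, c₁, c₂, c₃, c₄) such that for all ν > 0 and t > 0 with ν·t ≤ 1: c·ν^{(2ρ₂−1)/ρ₁}·t^{1+(2ρ₂−1)/ρ₁} ≤ Σ_{k=1}^∞ σ_k²·(1 − exp(−2νλ_k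 t))/(2νλ_k) ≤ C·ν^{(2ρ₂−1)/ρ₁}·t^{1+(2ρ₂−1)/ρ₁}. -/
open Finset

private lemma aux_int {a b s : ℝ} (ha : 0 < a) (hab : a ≤ b) (hs : s ≤ 0) (hs1 : s ≠ -1) :
    (b - a) * b ^ s ≤ (b ^ (s + 1) - a ^ (s + 1)) / (s + 1) := by
  have h0 : (0:ℝ) ∉ Set.uIcc a b := by
    rw [Set.uIcc_of_le hab]
    rintro ⟨h1, -⟩
    exact absurd h1 (not_le.2 ha)
  rw [← integral_rpow (Or.inr ⟨hs1, h0⟩)]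
  have hconst : (b - a) * b ^ s = ∫ _ in a..b, b ^ s := by
    rw [intervalIntegral.integral_const, smul_eq_mul]
  rw [hconst]
  refine intervalIntegral.integral_mono_on hab intervalIntegrable_const
    (intervalIntegral.intervalIntegrable_rpow (Or.inr h0)) ?_
  intro x hx
  exact Real.rpow_le_rpow_of_nonpos (lt_of_lt_of_le ha hx.1) hx.2 hs

private lemma one_sub_exp_neg_le (u : ℝ) : 1 - Real.exp (-u) ≤ u := by
  have := Real.add_one_le_exp (-u); linarith

private lemma le_one_sub_exp_neg (u : ℝ) :
    u * Real.exp (-u) ≤ 1 - Real.exp (-u) := by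
  have h := Real.add_one_le_exp u
  have he : 0 < Real.exp (-u) := Real.exp_pos _
  have key : (u + 1) * Real.exp (-u) ≤ 1 := by
    calc (u + 1) * Real.exp (-u) ≤ Real.exp u * Real.exp (-u) :=
          mul_le_mul_of_nonneg_right (by linarith) he.le
      _ = 1 := by rw [← Real.exp_add]; simp
  nlinarith

private lemma head_upper {a : ℝ} (ha0 : 0 ≤ a) (ha1 : a < 1) (N : ℕ) (hN : 1 ≤ N) :
    ∑ i ∈ Finset.range N, ((i + 1 : ℕ) : ℝ) ^ (-a) ≤ (1 + 1 / (1 - a)) * (N : ℝ) ^ (1 - a) := by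
  have hp : 0 < 1 - a := by linarith
  obtain ⟨M, rfl⟩ : ∃ M, N = M + 1 := ⟨N - 1, by omega⟩
  rw [Finset.sum_range_succ']
  have key : ∀ i : ℕ, ((i:ℝ) + 1 + 1) ^ (-a) ≤
      (((i:ℝ) + 1 + 1) ^ (1 - a) - ((i:ℝ) + 1) ^ (1 - a)) / (1 - a) := by
    intro i
    have h := aux_int (a := (i:ℝ) + 1) (b := (i:ℝ) + 1 + 1) (s := -a)
      (by positivity) (by linarith) (by linarith)
      (by intro h; have := neg_injective h; linarith)
    have e1 : ((i:ℝ) + 1 + 1) - ((i:ℝ) + 1) = 1 := by ring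
    have e2 : -a + 1 = 1 - a := by ring
    rw [e1, e2, one_mul] at h
    exact h
  have tele : ∑ i ∈ Finset.range M, (((i:ℝ) + 1 + 1) ^ (1 - a) - ((i:ℝ) + 1) ^ (1 - a))
      = ((M:ℝ) + 1) ^ (1 - a) - 1 := by
    have h := Finset.sum_range_sub (fun i => ((i:ℝ) + 1) ^ (1 - a)) M
    push_cast at h
    norm_num at h
    rw [Finset.sum_sub_distrib]
    exact h
  have hsum_le : ∑ i ∈ Finset.range M, (((i + 1 + 1 : ℕ)) : ℝ) ^ (-a)
      ≤ (((M:ℝ) + 1) ^ (1 - a) - 1) / (1 - a) := by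
    calc ∑ i ∈ Finset.range M, (((i + 1 + 1 : ℕ)) : ℝ) ^ (-a)
        = ∑ i ∈ Finset.range M, ((i:ℝ) + 1 + 1) ^ (-a) := by push_cast; rfl
      _ ≤ ∑ i ∈ Finset.range M, ((((i:ℝ) + 1 + 1) ^ (1 - a) - ((i:ℝ) + 1) ^ (1 - a)) / (1 - a)) :=
          Finset.sum_le_sum fun i _ => key i
      _ = (∑ i ∈ Finset.range M, (((i:ℝ) + 1 + 1) ^ (1 - a) - ((i:ℝ) + 1) ^ (1 - a))) / (1 - a) := by
          rw [Finset.sum_div]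
      _ = (((M:ℝ) + 1) ^ (1 - a) - 1) / (1 - a) := by rw [tele]
  have hX : (1:ℝ) ≤ ((M:ℝ) + 1) ^ (1 - a) := by
    have hM1 : (1:ℝ) ≤ (M:ℝ) + 1 := by linarith [Nat.cast_nonneg (α := ℝ) M]
    calc (1:ℝ) = 1 ^ (1 - a) := (Real.one_rpow _).symm
      _ ≤ ((M:ℝ) + 1) ^ (1 - a) := Real.rpow_le_rpow zero_le_one hM1 hp.le
  have h01 : (((0:ℕ) + 1 : ℕ) : ℝ) ^ (-a) = 1 := by norm_num [Real.one_rpow]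
  rw [h01]
  have h2 : (1:ℝ) ≤ 1 / (1 - a) := by rw [le_div_iff₀ hp]; linarith
  have e3 : (1 + 1 / (1 - a)) * ((M:ℝ) + 1) ^ (1 - a)
      = ((M:ℝ) + 1) ^ (1 - a) + ((M:ℝ) + 1) ^ (1 - a) / (1 - a) := by ring
  have e4 : (((M:ℝ) + 1) ^ (1 - a) - 1) / (1 - a)
      = ((M:ℝ) + 1) ^ (1 - a) / (1 - a) - 1 / (1 - a) := by ring
  have hMcast : (((M + 1 : ℕ)) : ℝ) = (M:ℝ) + 1 := by push_cast; ring
  rw [hMcast]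
  linarith [hsum_le]

private lemma step_tail {b : ℝ} (hb : 1 < b) (j : ℕ) (hj : 1 ≤ j) :
    (j : ℝ) ^ (-b) ≤ (2 ^ b / (b - 1)) * ((j:ℝ) ^ (1 - b) - ((j:ℝ) + 1) ^ (1 - b)) := by
  have hj0 : (0:ℝ) < j := by exact_mod_cast hj
  have hj1 : (1:ℝ) ≤ (j:ℝ) := by exact_mod_cast hj
  have h := aux_int (a := (j:ℝ)) (b := (j:ℝ) + 1) (s := -b) hj0 (by linarith) (by linarith)
    (by intro h; have := neg_injective h; linarith)
  have e1 : ((j:ℝ) + 1) - (j:ℝ) = 1 := by ring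
  rw [e1, one_mul] at h
  have e2 : ((((j:ℝ) + 1)) ^ (-b + 1) - (j:ℝ) ^ (-b + 1)) / (-b + 1)
      = ((j:ℝ) ^ (1 - b) - ((j:ℝ) + 1) ^ (1 - b)) / (b - 1) := by
    have e : (-b + 1 : ℝ) = 1 - b := by ring
    rw [e, div_eq_div_iff (by linarith : (1 - b : ℝ) ≠ 0) (by
      have : (0:ℝ) < b - 1 := by linarith
      exact this.ne')]
    ring
  rw [e2] at h
  have h2pos : (0:ℝ) < 2 ^ b := Real.rpow_pos_of_pos (by norm_num) b
  have h2 : (j:ℝ) ^ (-b) ≤ 2 ^ b * (((j:ℝ) + 1) ^ (-b)) := by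
    have hle : (j:ℝ) + 1 ≤ 2 * j := by linarith
    have h3 : ((2:ℝ) * j) ^ (-b) ≤ ((j:ℝ) + 1) ^ (-b) :=
      Real.rpow_le_rpow_of_nonpos (by linarith) hle (by linarith)
    have h4 : ((2:ℝ) * j) ^ (-b) = 2 ^ (-b) * (j:ℝ) ^ (-b) :=
      Real.mul_rpow (by norm_num) hj0.le
    have h5 : (2:ℝ) ^ b * (2:ℝ) ^ (-b) = 1 := by
      rw [← Real.rpow_add (by norm_num)]; simp
    calc (j:ℝ) ^ (-b) = 2 ^ b * (2 ^ (-b) * (j:ℝ) ^ (-b)) := by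
          rw [← mul_assoc, h5, one_mul]
      _ = 2 ^ b * (((2:ℝ) * j) ^ (-b)) := by rw [h4]
      _ ≤ 2 ^ b * (((j:ℝ) + 1) ^ (-b)) := mul_le_mul_of_nonneg_left h3 h2pos.le
  calc (j:ℝ) ^ (-b) ≤ 2 ^ b * (((j:ℝ) + 1) ^ (-b)) := h2
    _ ≤ 2 ^ b * (((j:ℝ) ^ (1 - b) - ((j:ℝ) + 1) ^ (1 - b)) / (b - 1)) :=
        mul_le_mul_of_nonneg_left h h2pos.le
    _ = (2 ^ b / (b - 1)) * ((j:ℝ) ^ (1 - b) - ((j:ℝ) + 1) ^ (1 - b)) := by ring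

private lemma head_lower {a : ℝ} (ha0 : 0 ≤ a) (N : ℕ) (hN : 1 ≤ N) :
    (N:ℝ) ^ (1 - a) ≤ ∑ i ∈ Finset.range N, ((i + 1 : ℕ) : ℝ) ^ (-a) := by
  have hN0 : (0:ℝ) < N := by exact_mod_cast hN
  have hterm : ∀ i ∈ Finset.range N, (N:ℝ) ^ (-a) ≤ ((i + 1 : ℕ) : ℝ) ^ (-a) := by
    intro i hi
    have hle : ((i + 1 : ℕ) : ℝ) ≤ (N:ℝ) := by
      exact_mod_cast Finset.mem_range.1 hi
    exact Real.rpow_le_rpow_of_nonpos (by positivity) hle (by linarith)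
  have hcard := Finset.card_nsmul_le_sum (Finset.range N)
    (fun i => ((i + 1 : ℕ) : ℝ) ^ (-a)) ((N:ℝ) ^ (-a)) hterm
  rw [Finset.card_range, nsmul_eq_mul] at hcard
  calc (N:ℝ) ^ (1 - a) = (N:ℝ) * (N:ℝ) ^ (-a) := by
        rw [show (1:ℝ) - a = 1 + (-a) by ring, Real.rpow_add hN0, Real.rpow_one]
    _ ≤ _ := hcard

set_option maxHeartbeats 2000000 in
/-- Case `ρ₂ < 1/2` of Lemma A.4 (Example 2.5(c), spectral dispersion): if the eigenvalues
satisfy `λ_k ≍ k^{ρ₁}` and `σ_k ≍ k^{-ρ₂}` with `ρ₂ ∈ [0, 1/2)` and `ρ₁ + 2ρ₂ > 1`, then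
the cumulative noise variance `Σ_{k≥1} σ_k² (1 − exp(−2νλ_k t)) / (2νλ_k)` is of exact order
`ν^{(2ρ₂−1)/ρ₁} t^{1+(2ρ₂−1)/ρ₁}` uniformly over `ν·t ≤ 1`. -/
theorem spectral_dispersion_subcritical (ρ₁ ρ₂ : ℝ) (hρ₁ : 0 < ρ₁)
    (hρ₂0 : 0 ≤ ρ₂) (hρ₂ : ρ₂ < 1 / 2) (hsum : 1 < ρ₁ + 2 * ρ₂)
    (lam sig : ℕ → ℝ) (c₁ c₂ c₃ c₄ : ℝ)
    (hc₁ : 0 < c₁) (hc₁₂ : c₁ ≤ c₂) (hc₃ : 0 < c₃) (hc₃₄ : c₃ ≤ c₄)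
    (hlam : ∀ k : ℕ, 1 ≤ k → c₁ * (k : ℝ) ^ ρ₁ ≤ lam k ∧ lam k ≤ c₂ * (k : ℝ) ^ ρ₁)
    (hsig : ∀ k : ℕ, 1 ≤ k → c₃ * (k : ℝ) ^ (-ρ₂) ≤ sig k ∧ sig k ≤ c₄ * (k : ℝ) ^ (-ρ₂)) :
    ∃ c C : ℝ, 0 < c ∧ c ≤ C ∧
      ∀ ν t : ℝ, 0 < ν → 0 < t → ν * t ≤ 1 →
        c * ν ^ ((2 * ρ₂ - 1) / ρ₁) * t ^ (1 + (2 * ρ₂ - 1) / ρ₁) ≤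
          (∑' k : ℕ, (sig (k + 1)) ^ 2 *
            (1 - Real.exp (-2 * ν * lam (k + 1) * t)) / (2 * ν * lam (k + 1))) ∧
        (∑' k : ℕ, (sig (k + 1)) ^ 2 *
            (1 - Real.exp (-2 * ν * lam (k + 1) * t)) / (2 * ν * lam (k + 1))) ≤
          C * ν ^ ((2 * ρ₂ - 1) / ρ₁) * t ^ (1 + (2 * ρ₂ - 1) / ρ₁) := by
  have hc₂ : 0 < c₂ := hc₁.trans_le hc₁₂
  have hc₄ : 0 < c₄ := hc₃.trans_le hc₃₄
  have hp : 0 < 1 - 2 * ρ₂ := by linarith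
  have hp1 : 1 - 2 * ρ₂ ≤ 1 := by linarith
  have hbb : 1 < ρ₁ + 2 * ρ₂ := hsum
  have hbb1 : (0:ℝ) < ρ₁ + 2 * ρ₂ - 1 := by linarith
  refine ⟨Real.exp (-(2 * c₂)) * c₃ ^ 2 / 2,
    c₄ ^ 2 * (1 + 1 / (1 - 2 * ρ₂)) +
      c₄ ^ 2 * 2 ^ (ρ₁ + 2 * ρ₂) * 2 ^ (ρ₁ + 2 * ρ₂ - 1) / (2 * c₁ * (ρ₁ + 2 * ρ₂ - 1)),
    by positivity, ?_, ?_⟩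
  · -- c ≤ C
    have h1 : Real.exp (-(2 * c₂)) ≤ 1 := Real.exp_le_one_iff.2 (by linarith)
    have h2 : c₃ ^ 2 ≤ c₄ ^ 2 := by nlinarith
    have h3 : (0:ℝ) < 1 / (1 - 2 * ρ₂) := by positivity
    have h4 : (0:ℝ) ≤ c₄ ^ 2 * 2 ^ (ρ₁ + 2 * ρ₂) * 2 ^ (ρ₁ + 2 * ρ₂ - 1) /
        (2 * c₁ * (ρ₁ + 2 * ρ₂ - 1)) := by positivity
    nlinarith [Real.exp_pos (-(2 * c₂)), sq_nonneg c₃, sq_nonneg c₄]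
  intro ν t hν ht hνt
  have hνt0 : 0 < ν * t := mul_pos hν ht
  set x : ℝ := (ν * t) ^ (-(1 / ρ₁)) with hxdef
  have hx0 : 0 < x := Real.rpow_pos_of_pos hνt0 _
  have hx1 : 1 ≤ x := Real.one_le_rpow_of_pos_of_le_one_of_nonpos hνt0 hνt (by
    have : 0 < 1 / ρ₁ := by positivity
    linarith)
  set N : ℕ := ⌊x⌋₊ with hNdef
  have hN1 : 1 ≤ N := Nat.le_floor (by exact_mod_cast hx1)
  have hN0 : (0:ℝ) < N := by exact_mod_cast hN1
  have hNx : (N:ℝ) ≤ x := Nat.floor_le hx0.le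
  have hxN : x ≤ 2 * N := by
    have h := Nat.lt_floor_add_one x
    have h1 : (1:ℝ) ≤ (N:ℝ) := by exact_mod_cast hN1
    rw [← hNdef] at h
    linarith
  have hxpow : ∀ e : ℝ, x ^ e = (ν * t) ^ (-(e / ρ₁)) := by
    intro e
    rw [hxdef, ← Real.rpow_mul hνt0.le]
    congr 1
    ring
  have hxρ₁ : ν * t * x ^ ρ₁ = 1 := by
    rw [hxpow ρ₁, show -(ρ₁ / ρ₁) = -1 by field_simp [hρ₁.ne'], Real.rpow_neg_one]
    field_simp
  set G : ℕ → ℝ := fun j => sig j ^ 2 * (1 - Real.exp (-2 * ν * lam j * t)) / (2 * ν * lam j)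
    with hGdef
  have hGoalEq : (∑' k : ℕ, (sig (k + 1)) ^ 2 *
      (1 - Real.exp (-2 * ν * lam (k + 1) * t)) / (2 * ν * lam (k + 1))) = ∑' k, G (k + 1) := by
    simp only [hGdef]
  rw [hGoalEq]
  -- basic positivity facts
  have hlam_pos : ∀ j : ℕ, 1 ≤ j → 0 < lam j := by
    intro j hj
    have hj0 : (0:ℝ) < (j:ℝ) := by exact_mod_cast hj
    have h := (hlam j hj).1
    nlinarith [Real.rpow_pos_of_pos hj0 ρ₁]
  have hexp_le_one : ∀ j : ℕ, 1 ≤ j → Real.exp (-2 * ν * lam j * t) ≤ 1 := by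
    intro j hj
    rw [Real.exp_le_one_iff]
    nlinarith [hlam_pos j hj]
  have hG0 : ∀ j : ℕ, 1 ≤ j → 0 ≤ G j := by
    intro j hj
    have hl := hlam_pos j hj
    apply div_nonneg
    · exact mul_nonneg (sq_nonneg _) (by linarith [hexp_le_one j hj])
    · positivity
  have hsq : ∀ j : ℕ, 1 ≤ j → ((j:ℝ) ^ (-ρ₂)) ^ 2 = (j:ℝ) ^ (-(2 * ρ₂)) := by
    intro j hj
    have hj0 : (0:ℝ) < (j:ℝ) := by exact_mod_cast hj
    rw [← Real.rpow_natCast ((j:ℝ) ^ (-ρ₂)) 2, ← Real.rpow_mul hj0.le]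
    congr 1
    push_cast
    ring
  have hsig2_ub : ∀ j : ℕ, 1 ≤ j → sig j ^ 2 ≤ c₄ ^ 2 * (j:ℝ) ^ (-(2 * ρ₂)) := by
    intro j hj
    have hj0 : (0:ℝ) < (j:ℝ) := by exact_mod_cast hj
    have hs := hsig j hj
    have hb0 : (0:ℝ) ≤ c₃ * (j:ℝ) ^ (-ρ₂) := by positivity
    calc sig j ^ 2 ≤ (c₄ * (j:ℝ) ^ (-ρ₂)) ^ 2 :=
          pow_le_pow_left₀ (le_trans hb0 hs.1) hs.2 2
      _ = c₄ ^ 2 * ((j:ℝ) ^ (-ρ₂)) ^ 2 := by ring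
      _ = c₄ ^ 2 * (j:ℝ) ^ (-(2 * ρ₂)) := by rw [hsq j hj]
  have hsig2_lb : ∀ j : ℕ, 1 ≤ j → c₃ ^ 2 * (j:ℝ) ^ (-(2 * ρ₂)) ≤ sig j ^ 2 := by
    intro j hj
    have hj0 : (0:ℝ) < (j:ℝ) := by exact_mod_cast hj
    have hs := hsig j hj
    have hb0 : (0:ℝ) ≤ c₃ * (j:ℝ) ^ (-ρ₂) := by positivity
    calc c₃ ^ 2 * (j:ℝ) ^ (-(2 * ρ₂)) = (c₃ * (j:ℝ) ^ (-ρ₂)) ^ 2 := by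
          rw [← hsq j hj]; ring
      _ ≤ sig j ^ 2 := pow_le_pow_left₀ hb0 hs.1 2
  -- (B1) general upper bound on terms
  have hB1 : ∀ j : ℕ, 1 ≤ j →
      G j ≤ (c₄ ^ 2 / (2 * c₁ * ν)) * (j:ℝ) ^ (-(ρ₁ + 2 * ρ₂)) := by
    intro j hj
    have hj0 : (0:ℝ) < (j:ℝ) := by exact_mod_cast hj
    have hl := hlam j hj
    have hlp := hlam_pos j hj
    have hjρ : (0:ℝ) < (j:ℝ) ^ ρ₁ := Real.rpow_pos_of_pos hj0 ρ₁
    have hnum : sig j ^ 2 * (1 - Real.exp (-2 * ν * lam j * t)) ≤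
        c₄ ^ 2 * (j:ℝ) ^ (-(2 * ρ₂)) := by
      have h1 : 1 - Real.exp (-2 * ν * lam j * t) ≤ 1 := by
        linarith [Real.exp_pos (-2 * ν * lam j * t)]
      calc sig j ^ 2 * (1 - Real.exp (-2 * ν * lam j * t)) ≤ sig j ^ 2 * 1 :=
            mul_le_mul_of_nonneg_left h1 (sq_nonneg _)
        _ = sig j ^ 2 := mul_one _
        _ ≤ c₄ ^ 2 * (j:ℝ) ^ (-(2 * ρ₂)) := hsig2_ub j hj
    have hden : 2 * ν * (c₁ * (j:ℝ) ^ ρ₁) ≤ 2 * ν * lam j := by nlinarith [hl.1]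
    have hdenpos : 0 < 2 * ν * (c₁ * (j:ℝ) ^ ρ₁) := by positivity
    have hkey := div_le_div₀ (by positivity) hnum hdenpos hden
    refine hkey.trans (le_of_eq ?_)
    rw [show -(ρ₁ + 2 * ρ₂) = -(2 * ρ₂) - ρ₁ by ring, Real.rpow_sub hj0,
      div_mul_div_comm, div_eq_div_iff hdenpos.ne'
        (by positivity : (0:ℝ) < 2 * c₁ * ν * (j:ℝ) ^ ρ₁).ne']
    ring
  -- (B2) headwise upper bound
  have hB2 : ∀ j : ℕ, 1 ≤ j → G j ≤ c₄ ^ 2 * (j:ℝ) ^ (-(2 * ρ₂)) * t := by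
    intro j hj
    have hlp := hlam_pos j hj
    have hDpos : 0 < 2 * ν * lam j := by positivity
    have h1le : 1 - Real.exp (-2 * ν * lam j * t) ≤ t * (2 * ν * lam j) := by
      have h := one_sub_exp_neg_le (2 * ν * lam j * t)
      rw [show -(2 * ν * lam j * t) = -2 * ν * lam j * t by ring] at h
      linarith [h]
    calc G j = sig j ^ 2 * ((1 - Real.exp (-2 * ν * lam j * t)) / (2 * ν * lam j)) := by
          simp only [hGdef]; ring
      _ ≤ sig j ^ 2 * t := by
          apply mul_le_mul_of_nonneg_left _ (sq_nonneg _)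
          rw [div_le_iff₀ hDpos]
          exact h1le
      _ ≤ c₄ ^ 2 * (j:ℝ) ^ (-(2 * ρ₂)) * t :=
          mul_le_mul_of_nonneg_right (hsig2_ub j hj) ht.le
  -- (B3) headwise lower bound for j ≤ N
  have hB3 : ∀ j : ℕ, 1 ≤ j → j ≤ N →
      Real.exp (-(2 * c₂)) * c₃ ^ 2 * (j:ℝ) ^ (-(2 * ρ₂)) * t ≤ G j := by
    intro j hj hjN
    have hj0 : (0:ℝ) < (j:ℝ) := by exact_mod_cast hj
    have hl := hlam j hj
    have hlp := hlam_pos j hj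
    have hDpos : 0 < 2 * ν * lam j := by positivity
    have hjx : (j:ℝ) ≤ x := le_trans (by exact_mod_cast hjN) hNx
    have hjρx : (j:ℝ) ^ ρ₁ ≤ x ^ ρ₁ := Real.rpow_le_rpow hj0.le hjx hρ₁.le
    have huM : 2 * ν * lam j * t ≤ 2 * c₂ := by
      have h2νt : (0:ℝ) ≤ 2 * ν * t := by positivity
      have ha := mul_le_mul_of_nonneg_left hl.2 h2νt
      have hb := mul_le_mul_of_nonneg_left hjρx (show (0:ℝ) ≤ 2 * ν * t * c₂ by positivity)
      have hc : 2 * ν * t * c₂ * x ^ ρ₁ = 2 * c₂ * (ν * t * x ^ ρ₁) := by ring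
      rw [hc, hxρ₁] at hb
      nlinarith [ha, hb]
    have hmono : Real.exp (-(2 * c₂)) ≤ Real.exp (-(2 * ν * lam j * t)) :=
      Real.exp_le_exp.2 (by linarith)
    have key : Real.exp (-(2 * c₂)) * t ≤
        (1 - Real.exp (-2 * ν * lam j * t)) / (2 * ν * lam j) := by
      rw [le_div_iff₀ hDpos]
      have hu0 : 0 ≤ 2 * ν * lam j * t := by positivity
      calc Real.exp (-(2 * c₂)) * t * (2 * ν * lam j)
          = (2 * ν * lam j * t) * Real.exp (-(2 * c₂)) := by ring
        _ ≤ (2 * ν * lam j * t) * Real.exp (-(2 * ν * lam j * t)) :=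
            mul_le_mul_of_nonneg_left hmono hu0
        _ ≤ 1 - Real.exp (-(2 * ν * lam j * t)) := le_one_sub_exp_neg _
        _ = 1 - Real.exp (-2 * ν * lam j * t) := by ring_nf
    have hEt : 0 ≤ Real.exp (-(2 * c₂)) * t := by positivity
    calc Real.exp (-(2 * c₂)) * c₃ ^ 2 * (j:ℝ) ^ (-(2 * ρ₂)) * t
        = (c₃ ^ 2 * (j:ℝ) ^ (-(2 * ρ₂))) * (Real.exp (-(2 * c₂)) * t) := by ring
      _ ≤ sig j ^ 2 * ((1 - Real.exp (-2 * ν * lam j * t)) / (2 * ν * lam j)) := by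
          apply mul_le_mul (hsig2_lb j hj) key hEt (sq_nonneg _)
      _ = G j := by simp only [hGdef]; ring
  -- summability
  have hGsum : Summable (fun k : ℕ => G (k + 1)) := by
    have hs : Summable (fun k : ℕ => (c₄ ^ 2 / (2 * c₁ * ν)) *
        (((k + 1 : ℕ)):ℝ) ^ (-(ρ₁ + 2 * ρ₂))) := by
      apply Summable.mul_left
      have h0 : Summable (fun n : ℕ => (n:ℝ) ^ (-(ρ₁ + 2 * ρ₂))) :=
        Real.summable_nat_rpow.2 (by linarith)
      exact (summable_nat_add_iff 1).2 h0
    exact Summable.of_nonneg_of_le (fun k => hG0 (k + 1) (by omega))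
      (fun k => hB1 (k + 1) (by omega)) hs
  constructor
  · -- lower bound
    have hsumN : ∑ i ∈ Finset.range N, G (i + 1) ≤ ∑' k, G (k + 1) :=
      Summable.sum_le_tsum (Finset.range N) (fun i _ => hG0 (i + 1) (by omega)) hGsum
    have hterm : ∀ i ∈ Finset.range N,
        Real.exp (-(2 * c₂)) * c₃ ^ 2 * ((i + 1 : ℕ):ℝ) ^ (-(2 * ρ₂)) * t ≤ G (i + 1) := by
      intro i hi
      exact hB3 (i + 1) (by omega) (Finset.mem_range.1 hi)
    have hhead := head_lower (a := 2 * ρ₂) (by linarith) N hN1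
    have hxpγ : x ^ (1 - 2 * ρ₂) = (ν * t) ^ ((2 * ρ₂ - 1) / ρ₁) := by
      rw [hxpow]
      congr 1
      ring
    have hNp : x ^ (1 - 2 * ρ₂) / 2 ≤ (N:ℝ) ^ (1 - 2 * ρ₂) := by
      have h2p : (2:ℝ) ^ (1 - 2 * ρ₂) ≤ 2 := by
        calc (2:ℝ) ^ (1 - 2 * ρ₂) ≤ (2:ℝ) ^ (1:ℝ) :=
              Real.rpow_le_rpow_of_exponent_le one_le_two hp1
          _ = 2 := Real.rpow_one 2
      have h2ppos : (0:ℝ) < (2:ℝ) ^ (1 - 2 * ρ₂) := Real.rpow_pos_of_pos two_pos _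
      have hdiv : (x / 2) ^ (1 - 2 * ρ₂) = x ^ (1 - 2 * ρ₂) / 2 ^ (1 - 2 * ρ₂) :=
        Real.div_rpow hx0.le (show (0:ℝ) ≤ 2 by norm_num) _
      have hsm : x ^ (1 - 2 * ρ₂) / 2 ≤ x ^ (1 - 2 * ρ₂) / 2 ^ (1 - 2 * ρ₂) := by
        apply div_le_div_of_nonneg_left (by positivity) h2ppos h2p
      have hxp2 : (x / 2) ^ (1 - 2 * ρ₂) ≤ (N:ℝ) ^ (1 - 2 * ρ₂) :=
        Real.rpow_le_rpow (by positivity) (by linarith) hp.le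
      linarith [hdiv ▸ hxp2]
    have hA : (0:ℝ) ≤ Real.exp (-(2 * c₂)) * c₃ ^ 2 * t := by positivity
    calc Real.exp (-(2 * c₂)) * c₃ ^ 2 / 2 * ν ^ ((2 * ρ₂ - 1) / ρ₁) *
          t ^ (1 + (2 * ρ₂ - 1) / ρ₁)
        = Real.exp (-(2 * c₂)) * c₃ ^ 2 * t * ((ν * t) ^ ((2 * ρ₂ - 1) / ρ₁)) / 2 := by
          rw [Real.rpow_add ht, Real.rpow_one, Real.mul_rpow hν.le ht.le]
          ring
      _ = Real.exp (-(2 * c₂)) * c₃ ^ 2 * t * (x ^ (1 - 2 * ρ₂) / 2) := by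
          rw [hxpγ]; ring
      _ ≤ Real.exp (-(2 * c₂)) * c₃ ^ 2 * t * ((N:ℝ) ^ (1 - 2 * ρ₂)) :=
          mul_le_mul_of_nonneg_left hNp hA
      _ ≤ Real.exp (-(2 * c₂)) * c₃ ^ 2 * t *
            (∑ i ∈ Finset.range N, ((i + 1 : ℕ):ℝ) ^ (-(2 * ρ₂))) :=
          mul_le_mul_of_nonneg_left hhead hA
      _ = ∑ i ∈ Finset.range N,
            (Real.exp (-(2 * c₂)) * c₃ ^ 2 * ((i + 1 : ℕ):ℝ) ^ (-(2 * ρ₂)) * t) := by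
          rw [Finset.mul_sum]
          exact Finset.sum_congr rfl fun i _ => by ring
      _ ≤ ∑ i ∈ Finset.range N, G (i + 1) := Finset.sum_le_sum hterm
      _ ≤ ∑' k, G (k + 1) := hsumN
  · -- upper bound
    have hsplit := Summable.sum_add_tsum_nat_add (f := fun k => G (k + 1)) N hGsum
    have h_head : ∑ i ∈ Finset.range N, G (i + 1) ≤
        (c₄ ^ 2 * (1 + 1 / (1 - 2 * ρ₂))) *
          (ν ^ ((2 * ρ₂ - 1) / ρ₁) * t ^ (1 + (2 * ρ₂ - 1) / ρ₁)) := by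
      have hxhead : t * x ^ (1 - 2 * ρ₂) =
          ν ^ ((2 * ρ₂ - 1) / ρ₁) * t ^ (1 + (2 * ρ₂ - 1) / ρ₁) := by
        rw [hxpow, show -((1 - 2 * ρ₂) / ρ₁) = (2 * ρ₂ - 1) / ρ₁ by ring,
          Real.mul_rpow hν.le ht.le, Real.rpow_add ht, Real.rpow_one]
        ring
      have hNple : (N:ℝ) ^ (1 - 2 * ρ₂) ≤ x ^ (1 - 2 * ρ₂) :=
        Real.rpow_le_rpow (Nat.cast_nonneg N) hNx hp.le
      calc ∑ i ∈ Finset.range N, G (i + 1)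
          ≤ ∑ i ∈ Finset.range N, (c₄ ^ 2 * ((i + 1 : ℕ):ℝ) ^ (-(2 * ρ₂)) * t) :=
            Finset.sum_le_sum fun i _ => hB2 (i + 1) (by omega)
        _ = c₄ ^ 2 * t * ∑ i ∈ Finset.range N, ((i + 1 : ℕ):ℝ) ^ (-(2 * ρ₂)) := by
            rw [Finset.mul_sum]
            exact Finset.sum_congr rfl fun i _ => by ring
        _ ≤ c₄ ^ 2 * t * ((1 + 1 / (1 - 2 * ρ₂)) * (N:ℝ) ^ (1 - 2 * ρ₂)) := by
            apply mul_le_mul_of_nonneg_left _ (by positivity)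
            exact head_upper (by linarith) (by linarith) N hN1
        _ ≤ c₄ ^ 2 * t * ((1 + 1 / (1 - 2 * ρ₂)) * x ^ (1 - 2 * ρ₂)) := by
            apply mul_le_mul_of_nonneg_left _ (by positivity)
            apply mul_le_mul_of_nonneg_left hNple (by positivity)
        _ = (c₄ ^ 2 * (1 + 1 / (1 - 2 * ρ₂))) * (t * x ^ (1 - 2 * ρ₂)) := by ring
        _ = (c₄ ^ 2 * (1 + 1 / (1 - 2 * ρ₂))) *
              (ν ^ ((2 * ρ₂ - 1) / ρ₁) * t ^ (1 + (2 * ρ₂ - 1) / ρ₁)) := by rw [hxhead]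
    have h_tail : (∑' i : ℕ, G (i + N + 1)) ≤
        (c₄ ^ 2 * 2 ^ (ρ₁ + 2 * ρ₂) * 2 ^ (ρ₁ + 2 * ρ₂ - 1) / (2 * c₁ * (ρ₁ + 2 * ρ₂ - 1))) *
          (ν ^ ((2 * ρ₂ - 1) / ρ₁) * t ^ (1 + (2 * ρ₂ - 1) / ρ₁)) := by
      set K : ℝ := (c₄ ^ 2 / (2 * c₁ * ν)) * (2 ^ (ρ₁ + 2 * ρ₂) / (ρ₁ + 2 * ρ₂ - 1))
        with hKdef
      have hK0 : 0 ≤ K := by positivity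
      have htsum_le : (∑' i : ℕ, G (i + N + 1)) ≤ K * (N:ℝ) ^ (1 - (ρ₁ + 2 * ρ₂)) := by
        apply Real.tsum_le_of_sum_range_le (fun i => hG0 (i + N + 1) (by omega))
        intro n
        have hstep : ∀ i : ℕ, G (i + N + 1) ≤
            K * (((i + N + 1 : ℕ):ℝ) ^ (1 - (ρ₁ + 2 * ρ₂)) -
              ((i + 1 + N + 1 : ℕ):ℝ) ^ (1 - (ρ₁ + 2 * ρ₂))) := by
          intro i
          have hcast : ((i + N + 1 : ℕ):ℝ) + 1 = ((i + 1 + N + 1 : ℕ):ℝ) := by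
            push_cast; ring
          calc G (i + N + 1)
              ≤ (c₄ ^ 2 / (2 * c₁ * ν)) * ((i + N + 1 : ℕ):ℝ) ^ (-(ρ₁ + 2 * ρ₂)) :=
                hB1 _ (by omega)
            _ ≤ (c₄ ^ 2 / (2 * c₁ * ν)) *
                  ((2 ^ (ρ₁ + 2 * ρ₂) / (ρ₁ + 2 * ρ₂ - 1)) *
                    (((i + N + 1 : ℕ):ℝ) ^ (1 - (ρ₁ + 2 * ρ₂)) -
                      (((i + N + 1 : ℕ):ℝ) + 1) ^ (1 - (ρ₁ + 2 * ρ₂)))) := by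
                apply mul_le_mul_of_nonneg_left _ (by positivity)
                exact step_tail hbb (i + N + 1) (by omega)
            _ = K * (((i + N + 1 : ℕ):ℝ) ^ (1 - (ρ₁ + 2 * ρ₂)) -
                  ((i + 1 + N + 1 : ℕ):ℝ) ^ (1 - (ρ₁ + 2 * ρ₂))) := by
                rw [hcast, hKdef]; ring
        have htel : ∑ i ∈ Finset.range n,
            (((i + N + 1 : ℕ):ℝ) ^ (1 - (ρ₁ + 2 * ρ₂)) -
              ((i + 1 + N + 1 : ℕ):ℝ) ^ (1 - (ρ₁ + 2 * ρ₂)))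
            = ((N + 1 : ℕ):ℝ) ^ (1 - (ρ₁ + 2 * ρ₂)) -
              ((n + N + 1 : ℕ):ℝ) ^ (1 - (ρ₁ + 2 * ρ₂)) := by
          have h := Finset.sum_range_sub' (fun i => ((i + N + 1 : ℕ):ℝ) ^ (1 - (ρ₁ + 2 * ρ₂))) n
          simp only [Nat.zero_add] at h
          convert h using 2
        have hf0 : ((N + 1 : ℕ):ℝ) ^ (1 - (ρ₁ + 2 * ρ₂)) ≤ (N:ℝ) ^ (1 - (ρ₁ + 2 * ρ₂)) := by
          apply Real.rpow_le_rpow_of_nonpos hN0 (by push_cast; linarith) (by linarith)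
        have hfn : (0:ℝ) ≤ ((n + N + 1 : ℕ):ℝ) ^ (1 - (ρ₁ + 2 * ρ₂)) :=
          Real.rpow_nonneg (Nat.cast_nonneg _) _
        calc ∑ i ∈ Finset.range n, G (i + N + 1)
            ≤ ∑ i ∈ Finset.range n,
                (K * (((i + N + 1 : ℕ):ℝ) ^ (1 - (ρ₁ + 2 * ρ₂)) -
                  ((i + 1 + N + 1 : ℕ):ℝ) ^ (1 - (ρ₁ + 2 * ρ₂)))) :=
              Finset.sum_le_sum fun i _ => hstep i
          _ = K * (((N + 1 : ℕ):ℝ) ^ (1 - (ρ₁ + 2 * ρ₂)) -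
                ((n + N + 1 : ℕ):ℝ) ^ (1 - (ρ₁ + 2 * ρ₂))) := by
              rw [← Finset.mul_sum, htel]
          _ ≤ K * (N:ℝ) ^ (1 - (ρ₁ + 2 * ρ₂)) := by
              apply mul_le_mul_of_nonneg_left _ hK0
              linarith
      have hNtail : (N:ℝ) ^ (1 - (ρ₁ + 2 * ρ₂)) ≤
          2 ^ (ρ₁ + 2 * ρ₂ - 1) * x ^ (1 - (ρ₁ + 2 * ρ₂)) := by
        have h1 : (N:ℝ) ^ (1 - (ρ₁ + 2 * ρ₂)) ≤ (x / 2) ^ (1 - (ρ₁ + 2 * ρ₂)) :=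
          Real.rpow_le_rpow_of_nonpos (by positivity) (by linarith) (by linarith)
        have h2 : (x / 2) ^ (1 - (ρ₁ + 2 * ρ₂)) =
            x ^ (1 - (ρ₁ + 2 * ρ₂)) / 2 ^ (1 - (ρ₁ + 2 * ρ₂)) :=
          Real.div_rpow hx0.le (show (0:ℝ) ≤ 2 by norm_num) _
        have h3 : ((2:ℝ) ^ (1 - (ρ₁ + 2 * ρ₂)))⁻¹ = 2 ^ (ρ₁ + 2 * ρ₂ - 1) := by
          rw [← Real.rpow_neg (by norm_num : (0:ℝ) ≤ 2)]
          congr 1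
          ring
        calc (N:ℝ) ^ (1 - (ρ₁ + 2 * ρ₂)) ≤ (x / 2) ^ (1 - (ρ₁ + 2 * ρ₂)) := h1
          _ = x ^ (1 - (ρ₁ + 2 * ρ₂)) * ((2:ℝ) ^ (1 - (ρ₁ + 2 * ρ₂)))⁻¹ := by
              rw [h2, div_eq_mul_inv]
          _ = 2 ^ (ρ₁ + 2 * ρ₂ - 1) * x ^ (1 - (ρ₁ + 2 * ρ₂)) := by rw [h3]; ring
      have hxtail : x ^ (1 - (ρ₁ + 2 * ρ₂)) =
          ν * (ν ^ ((2 * ρ₂ - 1) / ρ₁) * t ^ (1 + (2 * ρ₂ - 1) / ρ₁)) := by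
        rw [hxpow, show -((1 - (ρ₁ + 2 * ρ₂)) / ρ₁) = 1 + (2 * ρ₂ - 1) / ρ₁ by
            field_simp [hρ₁.ne']; ring, Real.mul_rpow hν.le ht.le, Real.rpow_add hν, Real.rpow_one]
        ring
      calc (∑' i : ℕ, G (i + N + 1)) ≤ K * (N:ℝ) ^ (1 - (ρ₁ + 2 * ρ₂)) := htsum_le
        _ ≤ K * (2 ^ (ρ₁ + 2 * ρ₂ - 1) * x ^ (1 - (ρ₁ + 2 * ρ₂))) :=
            mul_le_mul_of_nonneg_left hNtail hK0
        _ = (c₄ ^ 2 * 2 ^ (ρ₁ + 2 * ρ₂) * 2 ^ (ρ₁ + 2 * ρ₂ - 1) /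
              (2 * c₁ * (ρ₁ + 2 * ρ₂ - 1))) *
              (ν ^ ((2 * ρ₂ - 1) / ρ₁) * t ^ (1 + (2 * ρ₂ - 1) / ρ₁)) := by
            rw [hxtail, hKdef]
            field_simp [hν.ne', hc₁.ne', hbb1.ne']
    calc (∑' k : ℕ, G (k + 1))
        = ∑ i ∈ Finset.range N, G (i + 1) + ∑' i : ℕ, G (i + N + 1) := hsplit.symm
      _ ≤ (c₄ ^ 2 * (1 + 1 / (1 - 2 * ρ₂))) *
            (ν ^ ((2 * ρ₂ - 1) / ρ₁) * t ^ (1 + (2 * ρ₂ - 1) / ρ₁)) +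
          (c₄ ^ 2 * 2 ^ (ρ₁ + 2 * ρ₂) * 2 ^ (ρ₁ + 2 * ρ₂ - 1) /
              (2 * c₁ * (ρ₁ + 2 * ρ₂ - 1))) *
            (ν ^ ((2 * ρ₂ - 1) / ρ₁) * t ^ (1 + (2 * ρ₂ - 1) / ρ₁)) :=
          add_le_add h_head h_tail
      _ = (c₄ ^ 2 * (1 + 1 / (1 - 2 * ρ₂)) +
            c₄ ^ 2 * 2 ^ (ρ₁ + 2 * ρ₂) * 2 ^ (ρ₁ + 2 * ρ₂ - 1) /
              (2 * c₁ * (ρ₁ + 2 * ρ₂ - 1))) *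
            ν ^ ((2 * ρ₂ - 1) / ρ₁) * t ^ (1 + (2 * ρ₂ - 1) / ρ₁) := by ring
end

section
/- Let ρ₁ > 0 and let (λ_k)_{k≥1}, (σ_k)_{k≥1} be positive sequences satisfying c₁·k^{ρ₁} ≤ λ_k ≤ c₂·k^{ρ₁} and c₃·k^{−1/2} ≤ σ_k ≤ c₄·k^{−1/2} for all k ≥ 1 and fixed constants 0 < c₁ ≤ c₂ and 0 < c₃ ≤ c₄. Then there exist constants 0 < c ≤ C < ∞ (depending only on ρ₁, c₁, c₂, c₃, c₄) such that for all ν > 0 and t > 0 with ν·t ≤ 1: c·t·(1 − log(νt)/ρ₁) ≤ Σ_{k=1}^∞ σ_k²·(1 − exp(−2νλ_k t))/(2νλ_k) ≤ C·t·(1 − log(νt)/ρ₁). -/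
set_option maxHeartbeats 1000000


private lemma harmonic_lower (n : ℕ) :
    Real.log (n + 1) ≤ ∑ k ∈ Finset.range n, (1 : ℝ) / (k + 1) := by
  induction n with
  | zero => simp
  | succ n ih =>
    rw [Finset.sum_range_succ]
    have h : Real.log (((n:ℝ) + 2) / ((n:ℝ) + 1)) ≤ ((n:ℝ) + 2) / ((n:ℝ) + 1) - 1 :=
      Real.log_le_sub_one_of_pos (by positivity)
    rw [Real.log_div (by positivity) (by positivity)] at h
    have h2 : ((n:ℝ) + 2) / ((n:ℝ) + 1) - 1 = 1 / ((n:ℝ) + 1) := by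
      field_simp
      norm_num
    have e : ((n:ℕ):ℝ) + 1 + 1 = (n:ℝ) + 2 := by ring
    push_cast
    rw [e]
    linarith

private lemma harmonic_upper (n : ℕ) (hn : 1 ≤ n) :
    ∑ k ∈ Finset.range n, (1 : ℝ) / (k + 1) ≤ 1 + Real.log n := by
  induction n with
  | zero => omega
  | succ n ih =>
    rcases Nat.eq_or_lt_of_le hn with h | h
    · simp [← h]
    · have hn1 : 1 ≤ n := by omega
      have ihn := ih hn1
      rw [Finset.sum_range_succ]
      have h0 : (0:ℝ) < (n:ℝ) := by exact_mod_cast hn1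
      have h : Real.log ((n:ℝ) / ((n:ℝ) + 1)) ≤ (n:ℝ) / ((n:ℝ) + 1) - 1 :=
        Real.log_le_sub_one_of_pos (by positivity)
      rw [Real.log_div (by positivity) (by positivity)] at h
      have h2 : (n:ℝ) / ((n:ℝ) + 1) - 1 = -(1 / ((n:ℝ) + 1)) := by field_simp; ring
      push_cast
      linarith [h, h2, ihn]

private lemma exp_chord (M x : ℝ) (hM : 0 < M) (hx1 : 0 ≤ x) (hx2 : x ≤ M) :
    x / M * (1 - Real.exp (-M)) ≤ 1 - Real.exp (-x) := by
  set s := x / M with hs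
  have hs0 : 0 ≤ s := by positivity
  have hs1 : s ≤ 1 := by rw [hs, div_le_one hM]; exact hx2
  have key := convexOn_exp.2 (Set.mem_univ (0:ℝ)) (Set.mem_univ (-M))
    (by linarith : (0:ℝ) ≤ 1 - s) hs0 (by ring)
  have harg : (1 - s) • (0:ℝ) + s • (-M) = -x := by
    simp only [smul_eq_mul]
    have hM' := hM.ne'; rw [hs]; field_simp; ring
  rw [harg] at key
  simp only [smul_eq_mul, Real.exp_zero, mul_one] at key
  nlinarith

private lemma rpow_step (ρ x : ℝ) (hρ : 0 < ρ) (hx : 1 ≤ x) :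
    ρ * (x + 1) ^ (-(1 + ρ)) ≤ x ^ (-ρ) - (x + 1) ^ (-ρ) := by
  have hx0 : (0:ℝ) < x := by linarith
  have hx1 : (0:ℝ) < x + 1 := by linarith
  -- log((x+1)/x) ≥ 1/(x+1)
  have hlog : 1 / (x + 1) ≤ Real.log ((x + 1) / x) := by
    have h : Real.log (x / (x + 1)) ≤ x / (x + 1) - 1 :=
      Real.log_le_sub_one_of_pos (by positivity)
    rw [Real.log_div (ne_of_gt hx0) (ne_of_gt hx1)] at h
    rw [Real.log_div (ne_of_gt hx1) (ne_of_gt hx0)]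
    have : x / (x + 1) - 1 = -(1 / (x + 1)) := by field_simp; ring
    linarith
  -- ((x+1)/x)^ρ ≥ 1 + ρ/(x+1)
  have hratio : 1 + ρ / (x + 1) ≤ ((x + 1) / x) ^ ρ := by
    rw [Real.rpow_def_of_pos (by positivity)]
    have h1 : Real.log ((x + 1) / x) * ρ + 1 ≤ Real.exp (Real.log ((x + 1) / x) * ρ) :=
      Real.add_one_le_exp _
    have h2 : 1 / (x + 1) * ρ ≤ Real.log ((x + 1) / x) * ρ :=
      mul_le_mul_of_nonneg_right hlog (le_of_lt hρ)
    have e : ρ / (x + 1) = 1 / (x + 1) * ρ := by ring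
    linarith
  -- convert
  have e1 : ((x + 1) / x) ^ ρ * (x + 1) ^ (-ρ) = x ^ (-ρ) := by
    rw [Real.div_rpow (by positivity) (by positivity), Real.rpow_neg (le_of_lt hx1),
      Real.rpow_neg (le_of_lt hx0)]
    field_simp
  have e2 : (x + 1) ^ (-(1 + ρ)) = (x + 1) ^ (-ρ) / (x + 1) := by
    rw [show -(1 + ρ) = -ρ + (-1) by ring, Real.rpow_add hx1, Real.rpow_neg_one]
    field_simp
  have hp : (0:ℝ) < (x + 1) ^ (-ρ) := Real.rpow_pos_of_pos hx1 _
  have := mul_le_mul_of_nonneg_right hratio (le_of_lt hp)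
  rw [e1] at this
  rw [e2]
  have : (1 + ρ / (x + 1)) * (x + 1) ^ (-ρ) = (x + 1) ^ (-ρ) + ρ * ((x + 1) ^ (-ρ) / (x + 1)) := by
    field_simp
  nlinarith [mul_le_mul_of_nonneg_right hratio (le_of_lt hp), e1]

private lemma tail_sum (ρ : ℝ) (hρ : 0 < ρ) (N : ℕ) (hN : 1 ≤ N) :
    ∑' k : ℕ, ((N + k + 1 : ℕ) : ℝ) ^ (-(1 + ρ)) ≤ (N : ℝ) ^ (-ρ) / ρ := by
  apply Real.tsum_le_of_sum_range_le (fun k => Real.rpow_nonneg (by positivity) _)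
  intro n
  have key : ∀ m : ℕ, ∑ k ∈ Finset.range m, ((N + k + 1 : ℕ) : ℝ) ^ (-(1 + ρ))
      ≤ ((N : ℝ) ^ (-ρ) - ((N + m : ℕ) : ℝ) ^ (-ρ)) / ρ := by
    intro m
    induction m with
    | zero => simp
    | succ m ih =>
      rw [Finset.sum_range_succ]
      have hx : (1:ℝ) ≤ ((N + m : ℕ) : ℝ) := by
        have : 1 ≤ N + m := by omega
        exact_mod_cast this
      have step := rpow_step ρ ((N + m : ℕ) : ℝ) hρ hx
      have e : ((N + m : ℕ) : ℝ) + 1 = ((N + (m + 1) : ℕ) : ℝ) := by push_cast; ring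
      rw [e] at step
      have e2 : ((N + m + 1 : ℕ) : ℝ) = ((N + (m + 1) : ℕ) : ℝ) := by push_cast; ring
      rw [e2]
      calc ∑ k ∈ Finset.range m, ((N + k + 1 : ℕ) : ℝ) ^ (-(1 + ρ)) + ((N + (m+1) : ℕ) : ℝ) ^ (-(1+ρ))
          ≤ ((N : ℝ) ^ (-ρ) - ((N + m : ℕ) : ℝ) ^ (-ρ)) / ρ + (((N + m : ℕ) : ℝ) ^ (-ρ) - ((N + (m+1) : ℕ) : ℝ) ^ (-ρ)) / ρ := by
            apply add_le_add ih
            rw [le_div_iff₀ hρ, mul_comm]; exact step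
        _ = ((N : ℝ) ^ (-ρ) - ((N + (m+1) : ℕ) : ℝ) ^ (-ρ)) / ρ := by ring
  calc ∑ k ∈ Finset.range n, ((N + k + 1 : ℕ) : ℝ) ^ (-(1 + ρ))
      ≤ ((N : ℝ) ^ (-ρ) - ((N + n : ℕ) : ℝ) ^ (-ρ)) / ρ := key n
    _ ≤ (N : ℝ) ^ (-ρ) / ρ := by
        gcongr
        linarith [Real.rpow_nonneg (show (0:ℝ) ≤ ((N + n : ℕ) : ℝ) by positivity) (-ρ)]

/-- Critical case `ρ₂ = 1/2` of Lemma A.4 (Example 2.5(c), spectral dispersion): if the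
eigenvalues satisfy `λ_k ≍ k^{ρ₁}` and `σ_k ≍ k^{-1/2}`, then the cumulative noise variance
`Σ_{k≥1} σ_k² (1 − exp(−2νλ_k t)) / (2νλ_k)` exhibits the logarithmic correction
`t (1 − log(νt)/ρ₁)` uniformly over `ν·t ≤ 1`. -/
theorem spectral_dispersion_critical (ρ₁ : ℝ) (hρ₁ : 0 < ρ₁)
    (lam sig : ℕ → ℝ) (c₁ c₂ c₃ c₄ : ℝ)
    (hc₁ : 0 < c₁) (hc₁₂ : c₁ ≤ c₂) (hc₃ : 0 < c₃) (hc₃₄ : c₃ ≤ c₄)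
    (hlam : ∀ k : ℕ, 1 ≤ k → c₁ * (k : ℝ) ^ ρ₁ ≤ lam k ∧ lam k ≤ c₂ * (k : ℝ) ^ ρ₁)
    (hsig : ∀ k : ℕ, 1 ≤ k →
      c₃ * (k : ℝ) ^ (-(1 : ℝ) / 2) ≤ sig k ∧ sig k ≤ c₄ * (k : ℝ) ^ (-(1 : ℝ) / 2)) :
    ∃ c C : ℝ, 0 < c ∧ c ≤ C ∧
      ∀ ν t : ℝ, 0 < ν → 0 < t → ν * t ≤ 1 →
        c * (t * (1 - Real.log (ν * t) / ρ₁)) ≤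
          (∑' k : ℕ, (sig (k + 1)) ^ 2 *
            (1 - Real.exp (-2 * ν * lam (k + 1) * t)) / (2 * ν * lam (k + 1))) ∧
        (∑' k : ℕ, (sig (k + 1)) ^ 2 *
            (1 - Real.exp (-2 * ν * lam (k + 1) * t)) / (2 * ν * lam (k + 1))) ≤
          C * (t * (1 - Real.log (ν * t) / ρ₁)) := by
  have hc₂ : 0 < c₂ := lt_of_lt_of_le hc₁ hc₁₂
  have hc₄ : 0 < c₄ := lt_of_lt_of_le hc₃ hc₃₄
  have hlog2 : (0:ℝ) ≤ Real.log 2 := Real.log_nonneg one_le_two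
  set d : ℝ := (1 - Real.exp (-(2 * c₂))) / (2 * c₂) with hd
  have hexp2 : Real.exp (-(2 * c₂)) < 1 := Real.exp_lt_one_iff.mpr (by linarith)
  have hd0 : 0 < d := div_pos (by linarith) (by linarith)
  refine ⟨c₃ ^ 2 * d / 2, c₃ ^ 2 * d / 2 + c₄ ^ 2 * (1 + Real.log 2) + c₄ ^ 2 / (2 * c₁ * ρ₁),
    div_pos (mul_pos (pow_pos hc₃ 2) hd0) two_pos, ?_, ?_⟩
  · have h1 : (0:ℝ) ≤ c₄ ^ 2 * (1 + Real.log 2) := by positivity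
    have h2 : (0:ℝ) ≤ c₄ ^ 2 / (2 * c₁ * ρ₁) := by positivity
    linarith
  intro ν t hν ht hνt
  have hνt0 : 0 < ν * t := mul_pos hν ht
  have hlognp : Real.log (ν * t) ≤ 0 := Real.log_nonpos hνt0.le hνt
  have hL0 : 0 ≤ -Real.log (ν * t) / ρ₁ := div_nonneg (by linarith) hρ₁.le
  -- basic positivity of lam, sig
  have hnpos : ∀ n : ℕ, 1 ≤ n → (0:ℝ) < n := fun n hn => by exact_mod_cast hn
  have hlam0 : ∀ n : ℕ, 1 ≤ n → 0 < lam n := fun n hn =>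
    lt_of_lt_of_le (mul_pos hc₁ (Real.rpow_pos_of_pos (hnpos n hn) _)) (hlam n hn).1
  have hsig0 : ∀ n : ℕ, 1 ≤ n → 0 < sig n := fun n hn =>
    lt_of_lt_of_le (mul_pos hc₃ (Real.rpow_pos_of_pos (hnpos n hn) _)) (hsig n hn).1
  have hsq : ∀ n : ℕ, 1 ≤ n → (c₃ * (n:ℝ) ^ (-(1:ℝ)/2)) ^ 2 ≤ sig n ^ 2 ∧
      sig n ^ 2 ≤ (c₄ * (n:ℝ) ^ (-(1:ℝ)/2)) ^ 2 := by
    intro n hn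
    have h1 := (hsig n hn).1
    have h2 := (hsig n hn).2
    have hp : 0 ≤ c₃ * (n:ℝ) ^ (-(1:ℝ)/2) := by positivity
    constructor
    · exact pow_le_pow_left₀ hp h1 2
    · exact pow_le_pow_left₀ (hsig0 n hn).le h2 2
  have hsqe : ∀ (a : ℝ) (n : ℕ), 1 ≤ n → (a * (n:ℝ) ^ (-(1:ℝ)/2)) ^ 2 = a ^ 2 / n := by
    intro a n hn
    have hn0 : (0:ℝ) ≤ n := (hnpos n hn).le
    rw [mul_pow, ← Real.rpow_natCast ((n:ℝ) ^ (-(1:ℝ)/2)) 2, ← Real.rpow_mul hn0]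
    norm_num
    rw [Real.rpow_neg_one]
    rw [div_eq_mul_inv]
  set f : ℕ → ℝ := fun k => (sig (k + 1)) ^ 2 *
      (1 - Real.exp (-2 * ν * lam (k + 1) * t)) / (2 * ν * lam (k + 1)) with hf
  have hargs : ∀ k : ℕ, -2 * ν * lam (k+1) * t = -(2 * ν * lam (k+1) * t) := fun k => by ring
  have hxpos : ∀ k : ℕ, 0 < 2 * ν * lam (k+1) * t := by
    intro k
    have := hlam0 (k+1) (by omega)
    positivity
  have hDpos : ∀ k : ℕ, 0 < 2 * ν * lam (k+1) := by
    intro k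
    have := hlam0 (k+1) (by omega)
    positivity
  have hf0 : ∀ k : ℕ, 0 ≤ f k := by
    intro k
    have he : Real.exp (-2 * ν * lam (k+1) * t) ≤ 1 := by
      rw [hargs k]
      exact Real.exp_le_one_iff.mpr (by linarith [hxpos k])
    exact div_nonneg (mul_nonneg (sq_nonneg _) (by linarith)) (hDpos k).le
  -- upper bound per term, version 1: f k ≤ c₄² t / (k+1)
  have hf_ub_t : ∀ k : ℕ, f k ≤ c₄ ^ 2 / ((k:ℝ) + 1) * t := by
    intro k
    have hone : 1 - Real.exp (-2 * ν * lam (k+1) * t) ≤ 2 * ν * lam (k+1) * t := by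
      rw [hargs k]
      linarith [Real.add_one_le_exp (-(2 * ν * lam (k+1) * t))]
    have h1 : f k ≤ sig (k+1) ^ 2 * (2 * ν * lam (k+1) * t) / (2 * ν * lam (k+1)) := by
      simp only [hf]
      gcongr
      exact (hDpos k).le
    have e : sig (k+1) ^ 2 * (2 * ν * lam (k+1) * t) / (2 * ν * lam (k+1)) = sig (k+1) ^ 2 * t := by
      have hν0 : ν ≠ 0 := hν.ne'
      have hl0 : lam (k+1) ≠ 0 := (hlam0 (k+1) (by omega)).ne'
      field_simp
    have h2 : sig (k+1) ^ 2 ≤ c₄ ^ 2 / ((k:ℝ) + 1) := by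
      have := (hsq (k+1) (by omega)).2
      rw [hsqe c₄ (k+1) (by omega)] at this
      push_cast at this ⊢
      linarith
    calc f k ≤ sig (k+1) ^ 2 * t := by rw [← e]; exact h1
      _ ≤ c₄ ^ 2 / ((k:ℝ) + 1) * t := mul_le_mul_of_nonneg_right h2 ht.le
  -- upper bound per term, version 2: f k ≤ c₄²/(2c₁ν) (k+1)^{-(1+ρ₁)}
  have hf_ub_ν : ∀ k : ℕ, f k ≤ c₄ ^ 2 / (2 * c₁ * ν) * (((k+1:ℕ)):ℝ) ^ (-(1 + ρ₁)) := by
    intro k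
    have hk1 : (0:ℝ) < ((k+1:ℕ):ℝ) := hnpos (k+1) (by omega)
    have he : Real.exp (-2 * ν * lam (k+1) * t) ≤ 1 := by
      rw [hargs k]
      exact Real.exp_le_one_iff.mpr (by linarith [hxpos k])
    have hepos : 0 < Real.exp (-2 * ν * lam (k+1) * t) := Real.exp_pos _
    have h2 : sig (k+1) ^ 2 ≤ c₄ ^ 2 / ((k+1:ℕ):ℝ) := by
      have := (hsq (k+1) (by omega)).2
      rwa [hsqe c₄ (k+1) (by omega)] at this
    have hlamlb : c₁ * ((k+1:ℕ):ℝ) ^ ρ₁ ≤ lam (k+1) := (hlam (k+1) (by omega)).1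
    have h1 : f k ≤ (c₄ ^ 2 / ((k+1:ℕ):ℝ)) * 1 / (2 * ν * (c₁ * ((k+1:ℕ):ℝ) ^ ρ₁)) := by
      simp only [hf]
      have hden : 0 < 2 * ν * (c₁ * ((k+1:ℕ):ℝ) ^ ρ₁) := by positivity
      apply div_le_div₀ (by positivity) _ hden _
      · have h0e : 0 ≤ 1 - Real.exp (-2 * ν * lam (k+1) * t) := by linarith
        calc sig (k+1) ^ 2 * (1 - Real.exp (-2 * ν * lam (k+1) * t))
            ≤ (c₄ ^ 2 / ((k+1:ℕ):ℝ)) * 1 := by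
              apply mul_le_mul h2 (by linarith) h0e (by positivity)
        _ = (c₄ ^ 2 / ((k+1:ℕ):ℝ)) * 1 := rfl
      · nlinarith [Real.rpow_pos_of_pos hk1 ρ₁]
    have e : (c₄ ^ 2 / ((k+1:ℕ):ℝ)) * 1 / (2 * ν * (c₁ * ((k+1:ℕ):ℝ) ^ ρ₁))
        = c₄ ^ 2 / (2 * c₁ * ν) * (((k+1:ℕ)):ℝ) ^ (-(1 + ρ₁)) := by
      rw [show -(1 + ρ₁) = -1 + -ρ₁ by ring, Real.rpow_add hk1, Real.rpow_neg_one,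
        Real.rpow_neg hk1.le]
      have hrp : (0:ℝ) < ((k+1:ℕ):ℝ) ^ ρ₁ := Real.rpow_pos_of_pos hk1 _
      field_simp
    rw [e] at h1
    exact h1
  have hsum_aux : Summable (fun k : ℕ => (((k+1:ℕ)):ℝ) ^ (-(1 + ρ₁))) := by
    have hs0 : Summable (fun n : ℕ => (n:ℝ) ^ (-(1 + ρ₁))) :=
      Real.summable_nat_rpow.mpr (by linarith)
    exact (summable_nat_add_iff 1).mpr hs0
  have hsum : Summable f :=
    Summable.of_nonneg_of_le hf0 hf_ub_ν (hsum_aux.mul_left _)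
  constructor
  · -- LOWER BOUND
    have hA : (1:ℝ) ≤ (ν * t) ^ (-1/ρ₁ : ℝ) :=
      Real.one_le_rpow_of_pos_of_le_one_of_nonpos hνt0 hνt (by rw [neg_div]; exact neg_nonpos.mpr (by positivity))
    set N₁ := ⌊(ν * t) ^ (-1/ρ₁ : ℝ)⌋₊ with hN₁
    have hN₁1 : 1 ≤ N₁ := by
      rw [hN₁]
      exact Nat.le_floor (by simpa using hA)
    have key : ∀ k : ℕ, k < N₁ → c₃ ^ 2 * d * t / ((k:ℝ) + 1) ≤ f k := by
      intro k hk
      have hn1 : 1 ≤ k + 1 := by omega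
      have hnk : ((k+1:ℕ):ℝ) ≤ (ν * t) ^ (-1/ρ₁ : ℝ) := by
        have h1 : ((k+1:ℕ):ℝ) ≤ (N₁:ℝ) := by exact_mod_cast hk
        exact le_trans h1 (Nat.floor_le (by positivity))
      have hx_le : 2 * ν * lam (k+1) * t ≤ 2 * c₂ := by
        have h2 := (hlam (k+1) hn1).2
        have h3 : ((k+1:ℕ):ℝ) ^ ρ₁ ≤ ((ν*t) ^ (-1/ρ₁ : ℝ)) ^ ρ₁ :=
          Real.rpow_le_rpow (by positivity) hnk hρ₁.le
        have h4 : ((ν*t) ^ (-1/ρ₁ : ℝ)) ^ ρ₁ = (ν*t)⁻¹ := by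
          rw [← Real.rpow_mul hνt0.le]
          rw [show (-1/ρ₁) * ρ₁ = -1 by field_simp]
          exact Real.rpow_neg_one _
        rw [h4] at h3
        have h5 : lam (k+1) ≤ c₂ * (ν*t)⁻¹ :=
          le_trans h2 (mul_le_mul_of_nonneg_left h3 hc₂.le)
        have h7 : ν*t*lam (k+1) ≤ ν*t*(c₂*(ν*t)⁻¹) := mul_le_mul_of_nonneg_left h5 hνt0.le
        have h8 : ν*t*(c₂*(ν*t)⁻¹) = c₂ := by
          field_simp
        have e9 : 2*ν*lam (k+1)*t = 2*(ν*t*lam (k+1)) := by ring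
        rw [e9]
        rw [h8] at h7
        linarith
      have hchord := exp_chord (2*c₂) (2*ν*lam (k+1)*t) (by linarith) (hxpos k).le hx_le
      have hnum : 2 * ν * lam (k+1) * t * d ≤ 1 - Real.exp (-2 * ν * lam (k+1) * t) := by
        rw [hargs k]
        calc 2 * ν * lam (k+1) * t * d
            = 2*ν*lam (k+1)*t / (2*c₂) * (1 - Real.exp (-(2*c₂))) := by
              rw [hd]; field_simp
          _ ≤ 1 - Real.exp (-(2*ν*lam (k+1)*t)) := hchord
      have h7 : sig (k+1) ^ 2 * t * d ≤ f k := by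
        have h8 : sig (k+1) ^ 2 * (2 * ν * lam (k+1) * t * d) / (2 * ν * lam (k+1)) ≤ f k := by
          simp only [hf]
          gcongr
          exact (hDpos k).le
        have e : sig (k+1) ^ 2 * (2 * ν * lam (k+1) * t * d) / (2 * ν * lam (k+1))
            = sig (k+1) ^ 2 * t * d := by
          have hν0 : ν ≠ 0 := hν.ne'
          have hl0 : lam (k+1) ≠ 0 := (hlam0 (k+1) (by omega)).ne'
          field_simp
        rwa [e] at h8
      have h9 : c₃ ^ 2 / ((k:ℝ)+1) ≤ sig (k+1) ^ 2 := by
        have := (hsq (k+1) hn1).1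
        rw [hsqe c₃ (k+1) hn1] at this
        push_cast at this ⊢
        linarith
      calc c₃ ^ 2 * d * t / ((k:ℝ) + 1) = (c₃ ^ 2 / ((k:ℝ)+1)) * t * d := by ring
        _ ≤ sig (k+1) ^ 2 * t * d := by
            apply mul_le_mul_of_nonneg_right (mul_le_mul_of_nonneg_right h9 ht.le) hd0.le
        _ ≤ f k := h7
    have hlow1 : c₃ ^ 2 * d * t ≤ ∑' k, f k := by
      have h0 := key 0 (by omega)
      norm_num at h0
      exact le_trans h0 (Summable.le_tsum hsum 0 fun j _ => hf0 j)
    have hlow2 : c₃ ^ 2 * d * t * (-Real.log (ν*t)/ρ₁) ≤ ∑' k, f k := by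
      have hps : ∑ k ∈ Finset.range N₁, c₃ ^ 2 * d * t / ((k:ℝ)+1) ≤ ∑ k ∈ Finset.range N₁, f k :=
        Finset.sum_le_sum fun k hk => key k (Finset.mem_range.mp hk)
      have heq : ∑ k ∈ Finset.range N₁, c₃ ^ 2 * d * t / ((k:ℝ)+1)
          = c₃ ^ 2 * d * t * ∑ k ∈ Finset.range N₁, (1:ℝ)/((k:ℝ)+1) := by
        rw [Finset.mul_sum]
        exact Finset.sum_congr rfl fun k _ => by ring
      have hlogN : -Real.log (ν*t)/ρ₁ ≤ Real.log ((N₁:ℝ)+1) := by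
        have h7 : (ν*t) ^ (-1/ρ₁ : ℝ) < (N₁:ℝ) + 1 := Nat.lt_floor_add_one _
        have h8 : Real.log ((ν*t) ^ (-1/ρ₁ : ℝ)) ≤ Real.log ((N₁:ℝ)+1) :=
          Real.log_le_log (by positivity) h7.le
        rw [Real.log_rpow hνt0] at h8
        calc -Real.log (ν*t)/ρ₁ = -1/ρ₁ * Real.log (ν*t) := by ring
          _ ≤ Real.log ((N₁:ℝ)+1) := h8
      have hharm := harmonic_lower N₁
      have h9 : c₃ ^ 2 * d * t * (-Real.log (ν*t)/ρ₁)
          ≤ ∑ k ∈ Finset.range N₁, c₃ ^ 2 * d * t / ((k:ℝ)+1) := by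
        rw [heq]
        apply mul_le_mul_of_nonneg_left _ (by positivity)
        exact le_trans hlogN hharm
      exact le_trans h9 (le_trans hps (Summable.sum_le_tsum _ (fun k _ => hf0 k) hsum))
    have e : c₃ ^ 2 * d / 2 * (t * (1 - Real.log (ν*t) / ρ₁))
        = (c₃ ^ 2 * d * t) / 2 + (c₃ ^ 2 * d * t * (-Real.log (ν*t)/ρ₁)) / 2 := by ring
    rw [e]
    linarith
  · -- UPPER BOUND
    have hA : (1:ℝ) ≤ (ν * t) ^ (-1/ρ₁ : ℝ) :=
      Real.one_le_rpow_of_pos_of_le_one_of_nonpos hνt0 hνt (by rw [neg_div]; exact neg_nonpos.mpr (by positivity))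
    set N₂ := ⌈(ν * t) ^ (-1/ρ₁ : ℝ)⌉₊ with hN₂
    have hN₂1 : 1 ≤ N₂ := by
      have h : 0 < N₂ := by
        rw [hN₂]
        exact Nat.ceil_pos.mpr (by positivity)
      exact h
    have hN₂ge : (ν * t) ^ (-1/ρ₁ : ℝ) ≤ (N₂:ℝ) := Nat.le_ceil _
    have hN₂le : (N₂:ℝ) ≤ 2 * (ν * t) ^ (-1/ρ₁ : ℝ) := by
      have := Nat.ceil_lt_add_one (show (0:ℝ) ≤ (ν * t) ^ (-1/ρ₁ : ℝ) by positivity)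
      rw [← hN₂] at this
      linarith
    have hsplit := Summable.sum_add_tsum_nat_add N₂ hsum
    -- head
    have hhead : ∑ k ∈ Finset.range N₂, f k
        ≤ c₄ ^ 2 * t * (1 + Real.log 2 + -Real.log (ν*t)/ρ₁) := by
      have h1 : ∑ k ∈ Finset.range N₂, f k ≤ ∑ k ∈ Finset.range N₂, c₄ ^ 2 / ((k:ℝ)+1) * t :=
        Finset.sum_le_sum fun k _ => hf_ub_t k
      have heq : ∑ k ∈ Finset.range N₂, c₄ ^ 2 / ((k:ℝ)+1) * t
          = c₄ ^ 2 * t * ∑ k ∈ Finset.range N₂, (1:ℝ)/((k:ℝ)+1) := by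
        rw [Finset.mul_sum]
        exact Finset.sum_congr rfl fun k _ => by ring
      have hharm := harmonic_upper N₂ hN₂1
      have hlogN : Real.log (N₂:ℝ) ≤ Real.log 2 + -Real.log (ν*t)/ρ₁ := by
        have h2 : Real.log (N₂:ℝ) ≤ Real.log (2 * (ν * t) ^ (-1/ρ₁ : ℝ)) :=
          Real.log_le_log (by exact_mod_cast Nat.lt_of_lt_of_le Nat.zero_lt_one hN₂1) hN₂le
        rw [Real.log_mul (by norm_num) (by positivity), Real.log_rpow hνt0] at h2
        calc Real.log (N₂:ℝ) ≤ Real.log 2 + -1/ρ₁ * Real.log (ν*t) := h2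
          _ = Real.log 2 + -Real.log (ν*t)/ρ₁ := by ring
      calc ∑ k ∈ Finset.range N₂, f k
          ≤ c₄ ^ 2 * t * ∑ k ∈ Finset.range N₂, (1:ℝ)/((k:ℝ)+1) := by rw [← heq]; exact h1
        _ ≤ c₄ ^ 2 * t * (1 + Real.log (N₂:ℝ)) := by
            apply mul_le_mul_of_nonneg_left hharm (by positivity)
        _ ≤ c₄ ^ 2 * t * (1 + Real.log 2 + -Real.log (ν*t)/ρ₁) := by
            apply mul_le_mul_of_nonneg_left _ (by positivity)
            linarith
    -- tail
    have htail : ∑' k, f (k + N₂) ≤ c₄ ^ 2 * t / (2 * c₁ * ρ₁) := by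
      have hsum' : Summable (fun k => f (k + N₂)) := (summable_nat_add_iff N₂).mpr hsum
      have hsum'' : Summable (fun k : ℕ => ((N₂ + k + 1 : ℕ):ℝ) ^ (-(1 + ρ₁))) := by
        have := (summable_nat_add_iff N₂).mpr hsum_aux
        convert this using 2 with k
        congr 1
        push_cast
        ring
      have h1 : ∑' k, f (k + N₂)
          ≤ ∑' k : ℕ, c₄ ^ 2 / (2 * c₁ * ν) * ((N₂ + k + 1 : ℕ):ℝ) ^ (-(1 + ρ₁)) := by
        apply Summable.tsum_le_tsum _ hsum' (hsum''.mul_left _)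
        intro k
        have := hf_ub_ν (k + N₂)
        simpa only [show N₂ + k + 1 = k + N₂ + 1 by ring] using this
      have h2 : ∑' k : ℕ, c₄ ^ 2 / (2 * c₁ * ν) * ((N₂ + k + 1 : ℕ):ℝ) ^ (-(1 + ρ₁))
          = c₄ ^ 2 / (2 * c₁ * ν) * ∑' k : ℕ, ((N₂ + k + 1 : ℕ):ℝ) ^ (-(1 + ρ₁)) := by
        exact tsum_mul_left
      have h3 := tail_sum ρ₁ hρ₁ N₂ hN₂1
      have hNrp : ((N₂:ℝ)) ^ (-ρ₁) ≤ ν * t := by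
        have h4 : ((N₂:ℝ)) ^ (-ρ₁) ≤ ((ν * t) ^ (-1/ρ₁ : ℝ)) ^ (-ρ₁) :=
          Real.rpow_le_rpow_of_nonpos (by positivity) hN₂ge (by linarith)
        rw [← Real.rpow_mul hνt0.le] at h4
        rw [show (-1/ρ₁) * (-ρ₁) = 1 by field_simp] at h4
        rwa [Real.rpow_one] at h4
      calc ∑' k, f (k + N₂)
          ≤ c₄ ^ 2 / (2 * c₁ * ν) * ∑' k : ℕ, ((N₂ + k + 1 : ℕ):ℝ) ^ (-(1 + ρ₁)) := by
            rw [← h2]; exact h1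
        _ ≤ c₄ ^ 2 / (2 * c₁ * ν) * ((N₂:ℝ) ^ (-ρ₁) / ρ₁) := by
            apply mul_le_mul_of_nonneg_left h3 (by positivity)
        _ ≤ c₄ ^ 2 / (2 * c₁ * ν) * ((ν * t) / ρ₁) := by
            apply mul_le_mul_of_nonneg_left _ (by positivity)
            gcongr
        _ = c₄ ^ 2 * t / (2 * c₁ * ρ₁) := by field_simp
    -- combine
    have hS : ∑' k, f k = (∑ k ∈ Finset.range N₂, f k) + ∑' k, f (k + N₂) := hsplit.symm
    rw [hS]
    have htL0 : 0 ≤ t * (-Real.log (ν*t)/ρ₁) := mul_nonneg ht.le hL0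
    have h1 : c₄ ^ 2 * t * (1 + Real.log 2 + -Real.log (ν*t)/ρ₁)
        ≤ c₄ ^ 2 * (1 + Real.log 2) * (t + t * (-Real.log (ν*t)/ρ₁)) := by
      nlinarith [mul_nonneg (sq_nonneg c₄) (mul_nonneg hlog2 htL0)]
    have h2 : c₄ ^ 2 * t / (2 * c₁ * ρ₁)
        ≤ c₄ ^ 2 / (2 * c₁ * ρ₁) * (t + t * (-Real.log (ν*t)/ρ₁)) := by
      have hb : (0:ℝ) ≤ c₄ ^ 2 / (2 * c₁ * ρ₁) := by positivity
      have hmono := mul_le_mul_of_nonneg_left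
        (show t ≤ t + t * (-Real.log (ν*t)/ρ₁) from by linarith) hb
      calc c₄ ^ 2 * t / (2 * c₁ * ρ₁) = c₄ ^ 2 / (2 * c₁ * ρ₁) * t := by ring
        _ ≤ c₄ ^ 2 / (2 * c₁ * ρ₁) * (t + t * (-Real.log (ν*t)/ρ₁)) := hmono
    have h3 : (0:ℝ) ≤ c₃ ^ 2 * d / 2 * (t + t * (-Real.log (ν*t)/ρ₁)) := by
      apply mul_nonneg (le_of_lt (div_pos (mul_pos (pow_pos hc₃ 2) hd0) two_pos))
      linarith
    rw [show t * (1 - Real.log (ν*t)/ρ₁) = t + t * (-Real.log (ν*t)/ρ₁) from by ring]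
    linarith [hhead, htail, h1, h2, h3]
end

section
/- Let ρ₁ > 0, ρ₂ > 1/2, and let (λ_k)_{k≥1}, (σ_k)_{k≥1} be positive sequences satisfying c₁·k^{ρ₁} ≤ λ_k ≤ c₂·k^{ρ₁} and c₃·k^{−ρ₂} ≤ σ_k ≤ c₄·k^{−ρ₂} for all k ≥ 1 and fixed constants 0 < c₁ ≤ c₂ and 0 < c₃ ≤ c₄. Then there exist constants 0 < c ≤ C < ∞ (depending only on ρ₁, ρ₂, c₁, c₂, c₃, c₄) such that for all ν > 0 and t > 0 with ν·t ≤ 1: c·t ≤ Σ_{k=1}^∞ σ_k²·(1 − exp(−2νλ_k t))/(2νλ_k) ≤ C·t. -/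
set_option maxHeartbeats 1000000


/-- Case `ρ₂ > 1/2` of Lemma A.4 (Example 2.5(c), spectral dispersion): if the eigenvalues
satisfy `λ_k ≍ k^{ρ₁}` and `σ_k ≍ k^{-ρ₂}` with `ρ₂ > 1/2` (so the dispersion operator is
Hilbert–Schmidt), then the cumulative noise variance
`Σ_{k≥1} σ_k² (1 − exp(−2νλ_k t)) / (2νλ_k)` is of exact order `t` uniformly over `ν·t ≤ 1`. -/
theorem spectral_dispersion_supercritical (ρ₁ ρ₂ : ℝ) (hρ₁ : 0 < ρ₁) (hρ₂ : 1 / 2 < ρ₂)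
    (lam sig : ℕ → ℝ) (c₁ c₂ c₃ c₄ : ℝ)
    (hc₁ : 0 < c₁) (hc₁₂ : c₁ ≤ c₂) (hc₃ : 0 < c₃) (hc₃₄ : c₃ ≤ c₄)
    (hlam : ∀ k : ℕ, 1 ≤ k → c₁ * (k : ℝ) ^ ρ₁ ≤ lam k ∧ lam k ≤ c₂ * (k : ℝ) ^ ρ₁)
    (hsig : ∀ k : ℕ, 1 ≤ k → c₃ * (k : ℝ) ^ (-ρ₂) ≤ sig k ∧ sig k ≤ c₄ * (k : ℝ) ^ (-ρ₂)) :
    ∃ c C : ℝ, 0 < c ∧ c ≤ C ∧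
      ∀ ν t : ℝ, 0 < ν → 0 < t → ν * t ≤ 1 →
        c * t ≤
          (∑' k : ℕ, (sig (k + 1)) ^ 2 *
            (1 - Real.exp (-2 * ν * lam (k + 1) * t)) / (2 * ν * lam (k + 1))) ∧
        (∑' k : ℕ, (sig (k + 1)) ^ 2 *
            (1 - Real.exp (-2 * ν * lam (k + 1) * t)) / (2 * ν * lam (k + 1))) ≤
          C * t := by
  have h2ρ : (-(2*ρ₂)) < -1 := by linarith
  set g : ℕ → ℝ := fun k => ((k:ℝ)+1) ^ (-(2*ρ₂)) with hg
  have hgsum : Summable g := by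
    have h := Real.summable_nat_rpow.mpr h2ρ
    have := (summable_nat_add_iff 1).mpr h
    simpa [g] using this
  have hg0 : ∀ k, 0 ≤ g k := fun k => Real.rpow_nonneg (by positivity) _
  have hS1 : 1 ≤ ∑' k, g k := by
    have h0 := Summable.le_tsum hgsum 0 (fun i _ => hg0 i)
    simpa [g] using h0
  have hc2pos : 0 < c₂ := lt_of_lt_of_le hc₁ hc₁₂
  refine ⟨c₃^2 * Real.exp (-(2*c₂)), c₄^2 * ∑' k, g k, by positivity, ?_, ?_⟩
  · have he1 : Real.exp (-(2*c₂)) ≤ 1 := Real.exp_le_one_iff.mpr (by linarith)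
    have h34 : c₃^2 ≤ c₄^2 := by nlinarith
    have : c₃^2 * Real.exp (-(2*c₂)) ≤ c₄^2 * 1 := by nlinarith [Real.exp_pos (-(2*c₂)), sq_nonneg c₃]
    calc c₃^2 * Real.exp (-(2*c₂)) ≤ c₄^2 * 1 := this
      _ ≤ c₄^2 * ∑' k, g k := by
          apply mul_le_mul_of_nonneg_left hS1 (by positivity)
  · intro ν t hν ht hνt
    have hlampos : ∀ k : ℕ, 1 ≤ k → 0 < lam k := by
      intro k hk
      have h1 : (0:ℝ) < (k:ℝ) ^ ρ₁ := Real.rpow_pos_of_pos (by exact_mod_cast hk) _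
      nlinarith [(hlam k hk).1]
    set f : ℕ → ℝ := fun k => (sig (k + 1)) ^ 2 *
        (1 - Real.exp (-2 * ν * lam (k + 1) * t)) / (2 * ν * lam (k + 1)) with hf
    have hf0 : ∀ k, 0 ≤ f k := by
      intro k
      have hl := hlampos (k+1) (by omega)
      have hx : 0 ≤ 2*ν*lam (k+1)*t := by positivity
      have he : Real.exp (-2 * ν * lam (k + 1) * t) ≤ 1 :=
        Real.exp_le_one_iff.mpr (by nlinarith)
      apply div_nonneg _ (by positivity)
      have : (0:ℝ) ≤ (sig (k+1))^2 := sq_nonneg _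
      nlinarith
    have hfub : ∀ k, f k ≤ c₄^2 * g k * t := by
      intro k
      have hl := hlampos (k+1) (by omega)
      have hkpos : (0:ℝ) < (k:ℝ)+1 := by positivity
      -- 1 - exp(-x) ≤ x
      have hexp : 1 - Real.exp (-2 * ν * lam (k + 1) * t) ≤ 2 * ν * lam (k+1) * t := by
        have := Real.add_one_le_exp (-2 * ν * lam (k + 1) * t)
        linarith
      have hsig2 : (sig (k+1))^2 ≤ c₄^2 * g k := by
        obtain ⟨hs1, hs2⟩ := hsig (k+1) (by omega)
        have hr : (0:ℝ) ≤ ((k:ℝ)+1) ^ (-ρ₂) := Real.rpow_nonneg (le_of_lt hkpos) _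
        have hs0 : 0 ≤ sig (k+1) := le_trans (by positivity) hs1
        have hsq : (sig (k+1))^2 ≤ (c₄ * ((k:ℝ)+1) ^ (-ρ₂))^2 := by
          have : sig (k+1) ≤ c₄ * ((k:ℝ)+1) ^ (-ρ₂) := by
            simpa [Nat.cast_add, Nat.cast_one] using hs2
          nlinarith
        have hrw : (c₄ * ((k:ℝ)+1) ^ (-ρ₂))^2 = c₄^2 * g k := by
          rw [mul_pow, hg]
          congr 1
          rw [← Real.rpow_natCast (((k:ℝ)+1) ^ (-ρ₂)) 2, ← Real.rpow_mul (le_of_lt hkpos)]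
          norm_num
          ring_nf
        rw [← hrw]; exact hsq
      have hpos : (0:ℝ) < 2 * ν * lam (k+1) := by positivity
      have h1 : f k ≤ (sig (k+1))^2 * t := by
        rw [hf]
        dsimp only
        rw [div_le_iff₀ hpos]
        have hs2 : (0:ℝ) ≤ (sig (k+1))^2 := sq_nonneg _
        calc (sig (k+1))^2 * (1 - Real.exp (-2 * ν * lam (k + 1) * t))
            ≤ (sig (k+1))^2 * (2 * ν * lam (k+1) * t) :=
              mul_le_mul_of_nonneg_left hexp hs2
          _ = (sig (k+1))^2 * t * (2 * ν * lam (k+1)) := by ring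
      have : (sig (k+1))^2 * t ≤ c₄^2 * g k * t :=
        mul_le_mul_of_nonneg_right hsig2 (le_of_lt ht)
      linarith
    have hgsum' : Summable (fun k => c₄^2 * g k * t) := by
      simpa [mul_assoc, mul_comm, mul_left_comm] using (hgsum.mul_left (c₄^2)).mul_right t
    have hfsum : Summable f := Summable.of_nonneg_of_le hf0 hfub hgsum'
    constructor
    · -- lower bound via first term
      have hterm : c₃^2 * Real.exp (-(2*c₂)) * t ≤ f 0 := by
        obtain ⟨hl1, hl2⟩ := hlam 1 le_rfl
        obtain ⟨hs1, hs2⟩ := hsig 1 le_rfl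
        rw [Nat.cast_one, Real.one_rpow, mul_one] at hl1 hl2 hs1 hs2
        have hlp : 0 < lam 1 := lt_of_lt_of_le hc₁ hl1
        set x : ℝ := 2 * ν * lam 1 * t with hx
        have hxpos : 0 < x := by positivity
        have hxle : x ≤ 2 * c₂ := by
          have h1 : ν * lam 1 * t ≤ c₂ * (ν * t) := by nlinarith
          have h2 : c₂ * (ν * t) ≤ c₂ := by nlinarith
          nlinarith
        -- 1 - exp(-x) ≥ x * exp(-x) ≥ x * exp(-2c₂)
        have hkey : x * Real.exp (-(2*c₂)) ≤ 1 - Real.exp (-x) := by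
          have h1 : x + 1 ≤ Real.exp x := Real.add_one_le_exp x
          have hprod : Real.exp (-x) * Real.exp x = 1 := by
            rw [← Real.exp_add]; simp
          have hex : 0 < Real.exp x := Real.exp_pos x
          have henx : 0 < Real.exp (-x) := Real.exp_pos _
          have h3 : x * Real.exp (-x) ≤ 1 - Real.exp (-x) := by nlinarith
          have h4 : Real.exp (-(2*c₂)) ≤ Real.exp (-x) :=
            Real.exp_le_exp.mpr (by linarith)
          nlinarith
        have hf0eq : f 0 = (sig 1)^2 * (1 - Real.exp (-x)) / (2 * ν * lam 1) := by
          rw [hf]; norm_num [hx]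
        rw [hf0eq]
        rw [le_div_iff₀ (by positivity)]
        have hs2sq : c₃^2 ≤ (sig 1)^2 := by nlinarith
        have hexpos : 0 < Real.exp (-(2*c₂)) := Real.exp_pos _
        calc c₃^2 * Real.exp (-(2*c₂)) * t * (2 * ν * lam 1)
            = c₃^2 * (x * Real.exp (-(2*c₂))) := by rw [hx]; ring
          _ ≤ (sig 1)^2 * (x * Real.exp (-(2*c₂))) := by
              apply mul_le_mul_of_nonneg_right hs2sq
              positivity
          _ ≤ (sig 1)^2 * (1 - Real.exp (-x)) := by
              apply mul_le_mul_of_nonneg_left hkey (sq_nonneg _)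
      have hle := Summable.le_tsum hfsum 0 (fun i _ => hf0 i)
      exact le_trans hterm hle
    · have hsum_le := Summable.tsum_le_tsum hfub hfsum hgsum'
      have heq : ∑' k, c₄^2 * g k * t = c₄^2 * (∑' k, g k) * t := by
        rw [← tsum_mul_left, ← tsum_mul_right]
      rw [heq] at hsum_le
      exact le_of_le_of_eq hsum_le (by ring)
end
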